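/- arXiv:2111.08904 — 10 statements merged into one kernel-verified Lean document; each statement's English description precedes it below -/
import Mathlib

section
/- Let H ≥ 2. The point 1/2 is not a periodic point of the generalized tent map f (i.e., f^k(1/2) ≠ 1/2 for all k ≥ 1). Consequently, if (η_1, …, η_T) is a T-cycle of f, then η_j ≠ 1/2 for every j, the iterate f^T is differentiable at each η_j, and |(f^T)'(η_j)| = H^T > 1; in particular every periodic orbit of f is unstable. -/
/-- The generalized tent map. -/
noncomputable def tent (H : ℝ) (x : ℝ) : ℝ := if x ≤ 1 / 2 then H * x else H * (1 - x)

/-- `η 0, …, η (T-1)` is a `T`-cycle of `g`: the values are pairwise distinct,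
`η (j+1) = g (η j)`, and the cycle closes up (`η T = η 0`, hence `η` is `T`-periodic). -/
def IsCycle (g : ℝ → ℝ) (T : ℕ) (η : ℕ → ℝ) : Prop :=
  (∀ i < T, ∀ j < T, η i = η j → i = j) ∧ (∀ j, η (j + 1) = g (η j)) ∧ η T = η 0

lemma tent_nonpos {H x : ℝ} (hH : 2 ≤ H) (hx : x ≤ 0) : tent H x ≤ 0 := by
  unfold tent
  rw [if_pos (by linarith)]
  nlinarith

lemma tent_iter_half_nonpos {H : ℝ} (hH : 2 ≤ H) (k : ℕ) :
    (tent H)^[k + 2] (1/2 : ℝ) ≤ 0 := by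
  induction k with
  | zero =>
    have h1 : tent H (1/2) = H/2 := by unfold tent; rw [if_pos le_rfl]; ring
    have h2 : tent H (H/2) = H * (1 - H/2) := by
      unfold tent; rw [if_neg (by linarith)]
    rw [show (0+2 : ℕ) = 1 + 1 from rfl, Function.iterate_succ_apply',
      Function.iterate_one, h1, h2]
    nlinarith
  | succ n ih =>
    rw [show n + 1 + 2 = (n + 2) + 1 by ring, Function.iterate_succ_apply']
    exact tent_nonpos hH ih

lemma half_not_per {H : ℝ} (hH : 2 ≤ H) (k : ℕ) (hk : 1 ≤ k) :
    (tent H)^[k] (1/2 : ℝ) ≠ 1/2 := by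
  match k, hk with
  | 1, _ =>
    have h1 : tent H (1/2) = H/2 := by unfold tent; rw [if_pos le_rfl]; ring
    rw [Function.iterate_one, h1]
    intro h; linarith
  | (n+2), _ =>
    have := tent_iter_half_nonpos hH n
    intro h; rw [h] at this; linarith

lemma tent_hasDerivAt {H x : ℝ} (hH : 2 ≤ H) (hx : x ≠ 1/2) :
    ∃ c : ℝ, HasDerivAt (tent H) c x ∧ |c| = H := by
  rcases lt_or_gt_of_ne hx with h | h
  · refine ⟨H, ?_, abs_of_nonneg (by linarith)⟩
    have hd : HasDerivAt (fun y : ℝ => H * y) H x := by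
      simpa using (hasDerivAt_id x).const_mul H
    refine hd.congr_of_eventuallyEq ?_
    filter_upwards [Iio_mem_nhds h] with y hy
    unfold tent; rw [if_pos (le_of_lt hy)]
  · refine ⟨-H, ?_, by rw [abs_neg]; exact abs_of_nonneg (by linarith)⟩
    have hd : HasDerivAt (fun y : ℝ => H * (1 - y)) (-H) x := by
      have := ((hasDerivAt_id x).const_sub 1).const_mul H
      simpa using this
    refine hd.congr_of_eventuallyEq ?_
    filter_upwards [Ioi_mem_nhds h] with y hy
    unfold tent; rw [if_neg (not_le.mpr hy)]

lemma tent_iter_hasDerivAt {H : ℝ} (hH : 2 ≤ H) (n : ℕ) (x : ℝ)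
    (h : ∀ i < n, (tent H)^[i] x ≠ 1/2) :
    ∃ c : ℝ, HasDerivAt ((tent H)^[n]) c x ∧ |c| = H ^ n := by
  induction n with
  | zero => exact ⟨1, by simpa using hasDerivAt_id x, by simp⟩
  | succ n ih =>
    obtain ⟨c, hc, hca⟩ := ih (fun i hi => h i (hi.trans (Nat.lt_succ_self n)))
    obtain ⟨d, hd, hda⟩ := tent_hasDerivAt hH (h n (Nat.lt_succ_self n))
    refine ⟨d * c, ?_, ?_⟩
    · rw [Function.iterate_succ']
      exact HasDerivAt.comp x hd hc
    · rw [abs_mul, hca, hda, pow_succ]; ring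

theorem half_not_periodic_and_cycles_unstable (H : ℝ) (hH : 2 ≤ H) :
    (∀ k : ℕ, 1 ≤ k → (tent H)^[k] (1 / 2) ≠ 1 / 2) ∧
    (∀ T : ℕ, 1 ≤ T → ∀ η : ℕ → ℝ, IsCycle (tent H) T η →
      ∀ j < T, η j ≠ 1 / 2 ∧
        DifferentiableAt ℝ ((tent H)^[T]) (η j) ∧
        |deriv ((tent H)^[T]) (η j)| = H ^ T ∧ 1 < H ^ T) := by
  constructor
  · intro k hk
    have := half_not_per hH k hk
    norm_num at this ⊢
    exact this
  · intro T hT η hcyc j hj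
    obtain ⟨hinj, hrec, hclose⟩ := hcyc
    -- iterate formula
    have hiter : ∀ r i : ℕ, (tent H)^[i] (η r) = η (r + i) := by
      intro r i
      induction i with
      | zero => simp
      | succ i ih =>
        rw [Function.iterate_succ_apply', ih, ← hrec (r + i)]
        ring_nf
    -- periodicity
    have hper : ∀ m : ℕ, η (m + T) = η m := by
      intro m
      induction m with
      | zero => simpa using hclose
      | succ m ih =>
        rw [show m + 1 + T = (m + T) + 1 by ring, hrec, hrec, ih]
    -- full periodicity
    have hmulper : ∀ q r : ℕ, η (r + q * T) = η r := by
      intro q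
      induction q with
      | zero => simp
      | succ q ih =>
        intro r
        rw [show r + (q + 1) * T = (r + q * T) + T by ring, hper, ih]
    have hmod : ∀ m : ℕ, η m = η (m % T) := by
      intro m
      conv_lhs => rw [← Nat.mod_add_div m T]
      rw [Nat.mul_comm T (m / T)]
      exact hmulper (m / T) (m % T)
    -- every η r for r < T satisfies f^[T] (η r) = η r, hence η r ≠ 1/2
    have hne : ∀ r : ℕ, η r ≠ 1/2 := by
      intro r hr
      have hfix : (tent H)^[T] (η r) = η r := by
        rw [hiter r T, hper r]
      rw [hr] at hfix
      exact half_not_per hH T hT hfix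
    have hiitne : ∀ i < T, (tent H)^[i] (η j) ≠ 1/2 := by
      intro i _
      rw [hiter j i]
      exact hne (j + i)
    obtain ⟨c, hc, hca⟩ := tent_iter_hasDerivAt hH T (η j) hiitne
    refine ⟨by simpa using hne j, hc.differentiableAt, ?_, ?_⟩
    · rw [hc.deriv]; exact hca
    · exact one_lt_pow₀ (by linarith) (by omega)
end

section
/- Let H ≥ 2, T ≥ 1, and let (η_1, …, η_T) be a T-cycle of the generalized tent map f with η_j ≠ 1/2 for all j and multiplier μ = (f^T)'(η_1). If μ > 0 and the control parameter satisfies (H^T − 1/H)/(H^T − 1) < ϑ < (H^T + 1/H)/(H^T − 1), then (η_1, …, η_T) is a locally asymptotically stable T-cycle of the controlled map F. -/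
/-- The controlled (predictive control) map `F(x) = f(ϑ x + (1-ϑ) f^T(x))`. -/
noncomputable def ctrl (H : ℝ) (T : ℕ) (ϑ : ℝ) (x : ℝ) : ℝ :=
  tent H (ϑ * x + (1 - ϑ) * (tent H)^[T] x)

/-- A `T`-cycle `η` of `g` is locally asymptotically stable: every point of the cycle has an
open neighborhood all of whose points converge to it under iteration of `g^[T]`. -/
def CycleLAS (g : ℝ → ℝ) (T : ℕ) (η : ℕ → ℝ) : Prop :=
  ∀ j < T, ∃ U : Set ℝ, IsOpen U ∧ η j ∈ U ∧
    ∀ x ∈ U, Filter.Tendsto (fun n => (g^[T])^[n] x) Filter.atTop (nhds (η j))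

/-- Local slope sign of the tent map at the `i`-th cycle point. -/
noncomputable def tsign (η : ℕ → ℝ) (i : ℕ) : ℝ := if η i ≤ 1 / 2 then 1 else -1

lemma abs_tsign (η : ℕ → ℝ) (i : ℕ) : |tsign η i| = 1 := by
  unfold tsign; split <;> norm_num

lemma tent_step {H : ℝ} (hH : 0 < H) {η : ℕ → ℝ} (hstep : ∀ j, η (j + 1) = tent H (η j))
    (i : ℕ) (hne : η i ≠ 1 / 2) {x : ℝ} (hx : |x - η i| < |η i - 1 / 2|) :
    tent H x - η (i + 1) = tsign η i * H * (x - η i) := by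
  rcases lt_or_gt_of_ne hne with h | h
  · have hd : |η i - 1 / 2| = 1 / 2 - η i := by rw [abs_of_neg (by linarith)]; ring
    rw [hd] at hx
    have hx2 : x ≤ 1 / 2 := by linarith [le_abs_self (x - η i)]
    have hs : tsign η i = 1 := if_pos h.le
    rw [hstep i]
    unfold tent
    rw [if_pos hx2, if_pos h.le, hs]; ring
  · have hd : |η i - 1 / 2| = η i - 1 / 2 := abs_of_pos (by linarith)
    rw [hd] at hx
    have hx2 : ¬ x ≤ 1 / 2 := by
      have := neg_abs_le (x - η i); push_neg; linarith
    have hs : tsign η i = -1 := if_neg (by push_neg; linarith)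
    rw [hstep i]
    unfold tent
    rw [if_neg hx2, if_neg (by push_neg; linarith), hs]; ring

theorem cycle_LAS_positive_multiplier (H : ℝ) (hH : 2 ≤ H) (T : ℕ) (hT : 1 ≤ T) (ϑ : ℝ)
    (η : ℕ → ℝ) (hcyc : IsCycle (tent H) T η) (hhalf : ∀ j < T, η j ≠ 1 / 2)
    (μ : ℝ) (hμ : μ = deriv ((tent H)^[T]) (η 0)) (hμpos : 0 < μ)
    (hϑ1 : (H ^ T - 1 / H) / (H ^ T - 1) < ϑ) (hϑ2 : ϑ < (H ^ T + 1 / H) / (H ^ T - 1)) :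
    CycleLAS (ctrl H T ϑ) T η := by
  obtain ⟨-, hstep, hclose⟩ := hcyc
  have hH0 : (0 : ℝ) < H := by linarith
  have hT0 : 0 < T := hT
  -- periodicity
  have hper : ∀ j, η (j + T) = η j := by
    intro j
    induction j with
    | zero => simpa using hclose
    | succ n ih =>
      have : n + 1 + T = (n + T) + 1 := by omega
      rw [this, hstep (n + T), ih, ← hstep n]
  have hperM : ∀ q j, η (j + T * q) = η j := by
    intro q
    induction q with
    | zero => simp
    | succ n ih =>
      intro j
      have : j + T * (n + 1) = (j + T * n) + T := by ring
      rw [this, hper, ih]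
  have hmod : ∀ j, η j = η (j % T) := by
    intro j
    conv_lhs => rw [← Nat.mod_add_div j T]
    exact hperM (j / T) (j % T)
  have hhalf' : ∀ j, η j ≠ 1 / 2 := by
    intro j
    rw [hmod j]
    exact hhalf _ (Nat.mod_lt _ hT0)
  -- the uniform distance to 1/2
  have hne : (Finset.range T).Nonempty := ⟨0, Finset.mem_range.mpr hT0⟩
  set Δ : ℝ := (Finset.range T).inf' hne (fun i => |η i - 1 / 2|) with hΔdef
  have hΔpos : 0 < Δ := by
    rw [hΔdef, Finset.lt_inf'_iff]
    intro i _
    exact abs_pos.mpr (sub_ne_zero.mpr (hhalf' i))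
  have hΔle : ∀ i, Δ ≤ |η i - 1 / 2| := by
    intro i
    have h1 : Δ ≤ |η (i % T) - 1 / 2| :=
      Finset.inf'_le _ (Finset.mem_range.mpr (Nat.mod_lt _ hT0))
    rwa [← hmod i] at h1
  have hHT1 : (1 : ℝ) ≤ H ^ T := by
    calc (1 : ℝ) = 1 ^ T := (one_pow T).symm
    _ ≤ H ^ T := pow_le_pow_left₀ one_pos.le (by linarith) T
  have hHTpos : (0 : ℝ) < H ^ T := pow_pos hH0 T
  have hHTgt : (1 : ℝ) < H ^ T := by
    calc (1 : ℝ) < H := by linarith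
    _ = H ^ 1 := (pow_one H).symm
    _ ≤ H ^ T := pow_le_pow_right₀ (by linarith) hT
  -- local affinity of iterates
  have habsP : ∀ j k, |∏ i ∈ Finset.range k, tsign η (j + i)| = 1 := by
    intro j k
    induction k with
    | zero => simp
    | succ n ih => rw [Finset.prod_range_succ, abs_mul, ih, abs_tsign, mul_one]
  have hiter : ∀ k j x, H ^ k * |x - η j| < Δ →
      (tent H)^[k] x - η (j + k) =
        (∏ i ∈ Finset.range k, tsign η (j + i)) * H ^ k * (x - η j) := by
    intro k
    induction k with
    | zero => intro j x _; simp
    | succ n ih =>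
      intro j x hx
      have hmono : H ^ n * |x - η j| ≤ H ^ (n + 1) * |x - η j| :=
        mul_le_mul_of_nonneg_right (pow_le_pow_right₀ (by linarith) (Nat.le_succ n))
          (abs_nonneg _)
      have hxn : H ^ n * |x - η j| < Δ := lt_of_le_of_lt hmono hx
      have hihn := ih j x hxn
      have hd : |(tent H)^[n] x - η (j + n)| = H ^ n * |x - η j| := by
        rw [hihn, abs_mul, abs_mul, habsP, one_mul, abs_of_nonneg (pow_nonneg hH0.le n)]
      have hlt : |(tent H)^[n] x - η (j + n)| < |η (j + n) - 1 / 2| := by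
        rw [hd]; exact lt_of_lt_of_le hxn (hΔle (j + n))
      have hst := tent_step hH0 hstep (j + n) (hhalf' (j + n)) hlt
      rw [Function.iterate_succ_apply', show j + (n + 1) = (j + n) + 1 by omega,
        hst, hihn, Finset.prod_range_succ, pow_succ]
      ring
  -- the multiplier of f^T near each cycle point is +H^T
  have hP0 : (∏ i ∈ Finset.range T, tsign η (0 + i)) = 1 := by
    set a : ℝ := (∏ i ∈ Finset.range T, tsign η (0 + i)) * H ^ T with ha
    have hball : Metric.ball (η 0) (Δ / H ^ T) ∈ nhds (η 0) :=
      Metric.ball_mem_nhds _ (div_pos hΔpos hHTpos)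
    have hev : (tent H)^[T] =ᶠ[nhds (η 0)] fun x => a * (x - η 0) + η (0 + T) := by
      filter_upwards [hball] with x hx
      rw [Metric.mem_ball, Real.dist_eq] at hx
      have hx' : H ^ T * |x - η 0| < Δ := by
        rw [lt_div_iff₀ hHTpos] at hx; linarith [hx]
      have := hiter T 0 x hx'
      rw [ha]; linarith [this]
    have hda : HasDerivAt (fun x => a * (x - η 0) + η (0 + T)) a (η 0) := by
      simpa using (((hasDerivAt_id (η 0)).sub_const (η 0)).const_mul a).add_const (η (0 + T))
    have hμval : μ = a := by rw [hμ, hev.deriv_eq, hda.deriv]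
    have habs : |∏ i ∈ Finset.range T, tsign η (0 + i)| = 1 := habsP 0 T
    rcases (abs_eq (by norm_num : (0:ℝ) ≤ 1)).mp habs with h | h
    · exact h
    · exfalso
      rw [hμval, ha, h] at hμpos
      nlinarith
  have he_per : ∀ i, tsign η (i + T) = tsign η i := by
    intro i; unfold tsign; rw [hper]
  have htne : ∀ i, tsign η i ≠ 0 := by
    intro i hz
    have := abs_tsign η i
    rw [hz, abs_zero] at this
    norm_num at this
  have hPj : ∀ j, (∏ i ∈ Finset.range T, tsign η (j + i)) = 1 := by
    intro j
    induction j with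
    | zero => exact hP0
    | succ n ih =>
      have h1 := Finset.prod_range_succ (fun i => tsign η (n + i)) T
      have h2 := Finset.prod_range_succ' (fun i => tsign η (n + i)) T
      have h3 : (∏ i ∈ Finset.range T, tsign η (n + (i + 1)))
          = ∏ i ∈ Finset.range T, tsign η (n + 1 + i) := by
        apply Finset.prod_congr rfl
        intro i _
        rw [show n + (i + 1) = n + 1 + i by omega]
      simp only [h3] at h2
      have key : (∏ i ∈ Finset.range T, tsign η (n + 1 + i)) * tsign η (n + 0)
          = (∏ i ∈ Finset.range T, tsign η (n + i)) * tsign η (n + T) := by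
        rw [← h2, h1]
      rw [Nat.add_zero, he_per n, ih, one_mul] at key
      exact mul_right_cancel₀ (htne n) (by rw [one_mul]; exact key)
  -- the controlled slope c
  set c : ℝ := ϑ + (1 - ϑ) * H ^ T with hcdef
  have hden : (0 : ℝ) < H ^ T - 1 := by linarith
  have hϑ1' : H ^ T - 1 / H < ϑ * (H ^ T - 1) := (div_lt_iff₀ hden).mp hϑ1
  have hϑ2' : ϑ * (H ^ T - 1) < H ^ T + 1 / H := (lt_div_iff₀ hden).mp hϑ2
  have hc1 : c < 1 / H := by rw [hcdef]; nlinarith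
  have hc2 : -(1 / H) < c := by rw [hcdef]; nlinarith
  have hcabs : |c| < 1 / H := abs_lt.mpr ⟨hc2, hc1⟩
  set q : ℝ := |c| * H with hqdef
  have hq1 : q < 1 := by
    rw [hqdef]
    calc |c| * H < (1 / H) * H := by
          exact mul_lt_mul_of_pos_right hcabs hH0
    _ = 1 := by field_simp
  have hq0 : 0 ≤ q := mul_nonneg (abs_nonneg _) hH0.le
  have hcle1 : |c| ≤ 1 := by
    have : 1 / H ≤ 1 := by
      rw [div_le_one hH0]; linarith
    linarith
  -- the local affine form of g(x) = ϑ x + (1-ϑ) f^T x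
  have hgaff : ∀ j x, H ^ T * |x - η j| < Δ →
      ϑ * x + (1 - ϑ) * (tent H)^[T] x - η j = c * (x - η j) := by
    intro j x hx
    have h1 := hiter T j x hx
    rw [hPj j, hper j, one_mul] at h1
    rw [hcdef]
    linear_combination (1 - ϑ) * h1
  -- one step of the controlled map
  have hFstep : ∀ j x, H ^ T * |x - η j| < Δ →
      ctrl H T ϑ x - η (j + 1) = tsign η j * H * (c * (x - η j)) := by
    intro j x hx
    have hg := hgaff j x hx
    have hxΔ : |x - η j| < Δ := by nlinarith [abs_nonneg (x - η j)]
    have hy : |ϑ * x + (1 - ϑ) * (tent H)^[T] x - η j| < |η j - 1 / 2| := by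
      rw [hg, abs_mul]
      calc |c| * |x - η j| ≤ 1 * |x - η j| :=
            mul_le_mul_of_nonneg_right hcle1 (abs_nonneg _)
      _ = |x - η j| := one_mul _
      _ < Δ := hxΔ
      _ ≤ |η j - 1 / 2| := hΔle j
    have hst := tent_step hH0 hstep j (hhalf' j) hy
    unfold ctrl
    rw [hst, hg]
  have hFabs : ∀ j x, H ^ T * |x - η j| < Δ →
      |ctrl H T ϑ x - η (j + 1)| = q * |x - η j| := by
    intro j x hx
    rw [hFstep j x hx, abs_mul, abs_mul, abs_mul, abs_tsign, one_mul,
      abs_of_pos hH0, hqdef]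
    ring
  -- iterated contraction
  have hiterate : ∀ n j x, H ^ T * |x - η j| < Δ →
      |(ctrl H T ϑ)^[n] x - η (j + n)| ≤ q ^ n * |x - η j| ∧
        H ^ T * |(ctrl H T ϑ)^[n] x - η (j + n)| < Δ := by
    intro n
    induction n with
    | zero => intro j x hx; simpa using hx
    | succ n ih =>
      intro j x hx
      have habs := hFabs j x hx
      have hx' : H ^ T * |ctrl H T ϑ x - η (j + 1)| < Δ := by
        rw [habs]
        have h1 : q * |x - η j| ≤ |x - η j| := by
          nlinarith [abs_nonneg (x - η j)]
        nlinarith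
      obtain ⟨ih1, ih2⟩ := ih (j + 1) (ctrl H T ϑ x) hx'
      have hidx : j + 1 + n = j + (n + 1) := by omega
      rw [hidx] at ih1 ih2
      rw [Function.iterate_succ_apply]
      constructor
      · calc |(ctrl H T ϑ)^[n] (ctrl H T ϑ x) - η (j + (n + 1))|
            ≤ q ^ n * |ctrl H T ϑ x - η (j + 1)| := ih1
        _ = q ^ n * (q * |x - η j|) := by rw [habs]
        _ = q ^ (n + 1) * |x - η j| := by ring
      · exact ih2
  -- conclusion
  intro j _
  refine ⟨Metric.ball (η j) (Δ / H ^ T), Metric.isOpen_ball,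
    Metric.mem_ball_self (div_pos hΔpos hHTpos), ?_⟩
  intro x hx
  rw [Metric.mem_ball, Real.dist_eq, lt_div_iff₀ hHTpos] at hx
  have hx' : H ^ T * |x - η j| < Δ := by linarith
  rw [tendsto_iff_dist_tendsto_zero]
  have hbound : ∀ n : ℕ, dist (((ctrl H T ϑ)^[T])^[n] x) (η j) ≤ |x - η j| * (q ^ T) ^ n := by
    intro n
    have h1 := (hiterate (T * n) j x hx').1
    rw [hperM n j] at h1
    rw [← Function.iterate_mul, Real.dist_eq]
    calc |(ctrl H T ϑ)^[T * n] x - η j| ≤ q ^ (T * n) * |x - η j| := h1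
    _ = |x - η j| * (q ^ T) ^ n := by rw [pow_mul]; ring
  have htend : Filter.Tendsto (fun n : ℕ => |x - η j| * (q ^ T) ^ n)
      Filter.atTop (nhds 0) := by
    have := (tendsto_pow_atTop_nhds_zero_of_lt_one (pow_nonneg hq0 T)
      (pow_lt_one₀ hq0 hq1 (by omega))).const_mul |x - η j|
    simpa only [mul_zero] using this
  exact squeeze_zero (fun n => dist_nonneg) hbound htend
end

section
/- Let H ≥ 2, T ≥ 1, and let (η_1, …, η_T) be a T-cycle of the generalized tent map f with η_j ≠ 1/2 for all j and multiplier μ = (f^T)'(η_1). If μ < 0 and the control parameter satisfies (H^T − 1/H)/(H^T + 1) < ϑ < (H^T + 1/H)/(H^T + 1), then (η_1, …, η_T) is a locally asymptotically stable T-cycle of the controlled map F. -/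
/-- The local slope of the tent map. -/
noncomputable def tslope (H y : ℝ) : ℝ := if y ≤ 1 / 2 then H else -H

lemma tslope_abs (H y : ℝ) (hH : 0 ≤ H) : |tslope H y| = H := by
  unfold tslope; split <;> simp [abs_of_nonneg hH, abs_of_nonpos (neg_nonpos.mpr hH)]

lemma tent_local_affine (H y : ℝ) (hy : y ≠ 1 / 2) :
    ∃ ε > 0, ∀ x, |x - y| < ε → tent H x = tent H y + tslope H y * (x - y) := by
  refine ⟨|y - 1 / 2|, abs_pos.mpr (sub_ne_zero.mpr hy), fun x hx => ?_⟩
  rcases lt_or_gt_of_ne hy with h | h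
  · have hx2 : x ≤ 1 / 2 := by
      have hb : |y - 1 / 2| = 1 / 2 - y := by rw [abs_of_nonpos (by linarith)]; ring
      rw [hb, abs_lt] at hx
      linarith [hx.1, hx.2]
    simp only [tent, tslope, if_pos hx2, if_pos h.le]; ring
  · have hx2 : ¬ x ≤ 1 / 2 := by
      have hb : |y - 1 / 2| = y - 1 / 2 := abs_of_nonneg (by linarith)
      rw [hb, abs_lt] at hx
      push_neg
      linarith [hx.1, hx.2]
    simp only [tent, tslope, if_neg hx2, if_neg (not_le.mpr h)]; ring

/-- Iterating a map that is locally affine at each point of an orbit. -/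
lemma iter_affine (F : ℝ → ℝ) (η : ℕ → ℝ) (b : ℕ → ℝ)
    (h : ∀ j, ∃ ε > 0, ∀ x, |x - η j| < ε → F x = η (j + 1) + b j * (x - η j)) (j : ℕ) :
    ∀ m, ∃ ε > 0, ∀ x, |x - η j| < ε →
      F^[m] x = η (j + m) + (∏ k ∈ Finset.range m, b (j + k)) * (x - η j) := by
  intro m
  induction m with
  | zero => exact ⟨1, one_pos, fun x _ => by simp⟩
  | succ m ih =>
    obtain ⟨ε, hε, hx⟩ := ih
    obtain ⟨ε', hε', hx'⟩ := h (j + m)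
    set c := ∏ k ∈ Finset.range m, b (j + k) with hc
    refine ⟨min ε (ε' / (|c| + 1)), lt_min hε (by positivity), fun x hxlt => ?_⟩
    have h1 : |x - η j| < ε := lt_of_lt_of_le hxlt (min_le_left _ _)
    have h2 : |x - η j| < ε' / (|c| + 1) := lt_of_lt_of_le hxlt (min_le_right _ _)
    rw [Function.iterate_succ_apply', hx x h1]
    have habs : |η (j + m) + c * (x - η j) - η (j + m)| < ε' := by
      have : |c * (x - η j)| < ε' := by
        rw [abs_mul]
        have h3 : |x - η j| * (|c| + 1) < ε' := (lt_div_iff₀ (by positivity)).mp h2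
        nlinarith [abs_nonneg c, abs_nonneg (x - η j)]
      simpa using this
    rw [hx' _ habs]
    have : ∏ k ∈ Finset.range (m + 1), b (j + k) = c * b (j + m) := by
      rw [Finset.prod_range_succ, hc]
    rw [this, show j + (m + 1) = j + m + 1 from by ring]
    ring

lemma hasDerivAt_affine (c m y x : ℝ) :
    HasDerivAt (fun t => c + m * (t - y)) m x := by
  simpa using (((hasDerivAt_id x).sub_const y).const_mul m).const_add c

theorem cycle_LAS_negative_multiplier (H : ℝ) (hH : 2 ≤ H) (T : ℕ) (hT : 1 ≤ T) (ϑ : ℝ)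
    (η : ℕ → ℝ) (hcyc : IsCycle (tent H) T η) (hhalf : ∀ j < T, η j ≠ 1 / 2)
    (μ : ℝ) (hμ : μ = deriv ((tent H)^[T]) (η 0)) (hμneg : μ < 0)
    (hϑ1 : (H ^ T - 1 / H) / (H ^ T + 1) < ϑ) (hϑ2 : ϑ < (H ^ T + 1 / H) / (H ^ T + 1)) :
    CycleLAS (ctrl H T ϑ) T η := by
  obtain ⟨-, hstep, hclose⟩ := hcyc
  have hHpos : (0 : ℝ) < H := by linarith
  have hTpos : 0 < T := hT
  -- periodicity
  have hper : ∀ j, η (j + T) = η j := by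
    intro j
    induction j with
    | zero => simpa using hclose
    | succ n ih =>
      have : n + 1 + T = n + T + 1 := by ring
      rw [this, hstep (n + T), ih, ← hstep n]
  have hperq : ∀ q r, η (r + T * q) = η r := by
    intro q
    induction q with
    | zero => simp
    | succ n ih =>
      intro r
      have : r + T * (n + 1) = r + T * n + T := by ring
      rw [this, hper, ih]
  have hmod : ∀ j, η j = η (j % T) := by
    intro j
    conv_lhs => rw [← Nat.mod_add_div j T]
    exact hperq _ _
  have hhalf' : ∀ j, η j ≠ 1 / 2 := fun j => by
    rw [hmod j]; exact hhalf _ (Nat.mod_lt j hTpos)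
  -- local affine structure of the tent map along the orbit
  have htent : ∀ j, ∃ ε > 0, ∀ x, |x - η j| < ε →
      tent H x = η (j + 1) + tslope H (η j) * (x - η j) := by
    intro j
    obtain ⟨ε, hε, hmain⟩ := tent_local_affine H (η j) (hhalf' j)
    exact ⟨ε, hε, fun x hx => by rw [hmain x hx, ← hstep j]⟩
  -- local affine structure of f^[T]
  set P : ℕ → ℝ := fun j => ∏ k ∈ Finset.range T, tslope H (η (j + k)) with hP
  have hfT : ∀ j, ∃ ε > 0, ∀ x, |x - η j| < ε →
      (tent H)^[T] x = η j + P j * (x - η j) := by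
    intro j
    obtain ⟨ε, hε, hmain⟩ := iter_affine (tent H) η (fun k => tslope H (η k)) htent j T
    exact ⟨ε, hε, fun x hx => by rw [hmain x hx, hper j]⟩
  -- P is constant
  have hslope_ne : ∀ y, tslope H y ≠ 0 := by
    intro y; unfold tslope; split <;> intro h <;> nlinarith
  have hPsucc : ∀ j, P (j + 1) = P j := by
    intro j
    have h1 : P (j + 1) * tslope H (η j) = tslope H (η (j + T)) * P j := by
      have e1 : ∏ k ∈ Finset.range (T + 1), tslope H (η (j + k))
          = tslope H (η (j + T)) * P j := by
        rw [Finset.prod_range_succ, hP]; ring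
      have e2 : ∏ k ∈ Finset.range (T + 1), tslope H (η (j + k))
          = P (j + 1) * tslope H (η j) := by
        rw [Finset.prod_range_succ']
        simp only [hP, Nat.add_zero]
        congr 1
        refine Finset.prod_congr rfl fun k _ => ?_
        congr 2
        ring
      rw [← e1, e2]
    rw [hper j] at h1
    exact mul_right_cancel₀ (hslope_ne (η j)) (by rw [h1]; ring)
  have hPconst : ∀ j, P j = P 0 := by
    intro j
    induction j with
    | zero => rfl
    | succ n ih => rw [hPsucc n, ih]
  -- μ = P 0
  have hμP : μ = P 0 := by
    obtain ⟨ε, hε, hmain⟩ := hfT 0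
    have heq : (tent H)^[T] =ᶠ[nhds (η 0)] fun x => η 0 + P 0 * (x - η 0) := by
      filter_upwards [Metric.ball_mem_nhds (η 0) hε] with x hx
      exact hmain x (by simpa [Real.dist_eq] using hx)
    rw [hμ, heq.deriv_eq, (hasDerivAt_affine (η 0) (P 0) (η 0) (η 0)).deriv]
  -- |P 0| = H ^ T, hence μ = -H^T
  have habsP : |P 0| = H ^ T := by
    rw [hP]
    rw [Finset.abs_prod]
    rw [Finset.prod_congr rfl fun k _ => tslope_abs H (η (0 + k)) hHpos.le]
    simp
  have habsμ : |μ| = H ^ T := by rw [hμP]; exact habsP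
  have hμval : μ = -H ^ T := by
    rcases abs_cases μ with ⟨h1, h2⟩ | ⟨h1, h2⟩
    · linarith
    · linarith
  -- the effective slope a
  set a : ℝ := ϑ + (1 - ϑ) * μ with ha
  have hHT : (0 : ℝ) < H ^ T := pow_pos hHpos T
  have hden : (0 : ℝ) < H ^ T + 1 := by linarith
  have hamain : |a| < 1 / H := by
    have h1 : H ^ T - 1 / H < ϑ * (H ^ T + 1) := by
      have := (div_lt_iff₀ hden).mp hϑ1; linarith
    have h2 : ϑ * (H ^ T + 1) < H ^ T + 1 / H := by
      have := (lt_div_iff₀ hden).mp hϑ2; linarith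
    have haval : a = ϑ * (H ^ T + 1) - H ^ T := by rw [ha, hμval]; ring
    rw [abs_lt]; constructor <;> [skip; skip] <;> rw [haval] <;> linarith
  -- local affine structure of ctrl
  have hctrl : ∀ j, ∃ ε > 0, ∀ x, |x - η j| < ε →
      ctrl H T ϑ x = η (j + 1) + (tslope H (η j) * a) * (x - η j) := by
    intro j
    obtain ⟨ε, hε, hmain⟩ := hfT j
    obtain ⟨ε', hε', hmain'⟩ := tent_local_affine H (η j) (hhalf' j)
    refine ⟨min ε (ε' / (|a| + 1)), lt_min hε (by positivity), fun x hx => ?_⟩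
    have h1 : |x - η j| < ε := lt_of_lt_of_le hx (min_le_left _ _)
    have h2 : |x - η j| < ε' / (|a| + 1) := lt_of_lt_of_le hx (min_le_right _ _)
    have hg : ϑ * x + (1 - ϑ) * (tent H)^[T] x = η j + a * (x - η j) := by
      rw [hmain x h1, hPconst j, ← hμP, ha]; ring
    have hclose2 : |η j + a * (x - η j) - η j| < ε' := by
      have : |a * (x - η j)| < ε' := by
        rw [abs_mul]
        have h3 : |x - η j| * (|a| + 1) < ε' := (lt_div_iff₀ (by positivity)).mp h2
        nlinarith [abs_nonneg a, abs_nonneg (x - η j)]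
      simpa using this
    rw [ctrl, hg, hmain' _ hclose2, ← hstep j]
    ring
  -- the overall multiplier
  set Λ : ℝ := μ * a ^ T with hΛ
  have hΛabs : |Λ| < 1 := by
    have h1 : |a| ^ T < (1 / H) ^ T :=
      pow_lt_pow_left₀ hamain (abs_nonneg a) (by omega)
    have h2 : H ^ T * (1 / H) ^ T = 1 := by
      rw [← mul_pow]; field_simp; exact one_pow T
    rw [hΛ, abs_mul, abs_pow, habsμ]
    calc H ^ T * |a| ^ T < H ^ T * (1 / H) ^ T :=
          mul_lt_mul_of_pos_left h1 hHT
      _ = 1 := h2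
  -- conclusion
  intro j hj
  obtain ⟨ε, hε, hmain⟩ := iter_affine (ctrl H T ϑ) η (fun k => tslope H (η k) * a) hctrl j T
  have hprodΛ : (∏ k ∈ Finset.range T, tslope H (η (j + k)) * a) = Λ := by
    rw [Finset.prod_mul_distrib, Finset.prod_const, Finset.card_range,
      show (∏ k ∈ Finset.range T, tslope H (η (j + k))) = P j from rfl, hPconst j, ← hμP, hΛ]
  have hiter : ∀ x, |x - η j| < ε → (ctrl H T ϑ)^[T] x = η j + Λ * (x - η j) := by
    intro x hx
    rw [hmain x hx, hprodΛ, hper j]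
  refine ⟨Metric.ball (η j) ε, Metric.isOpen_ball, Metric.mem_ball_self hε, fun x hx => ?_⟩
  have hx0 : |x - η j| < ε := by simpa [Real.dist_eq] using hx
  have hform : ∀ n, ((ctrl H T ϑ)^[T])^[n] x = η j + Λ ^ n * (x - η j) ∧
      |((ctrl H T ϑ)^[T])^[n] x - η j| < ε := by
    intro n
    induction n with
    | zero => exact ⟨by simp, by simpa using hx0⟩
    | succ n ih =>
      obtain ⟨ihf, ihb⟩ := ih
      have hnext : ((ctrl H T ϑ)^[T])^[n+1] x = η j + Λ * (Λ ^ n * (x - η j)) := by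
        rw [Function.iterate_succ_apply', hiter _ ihb, ihf]
        ring_nf
      constructor
      · rw [hnext]; ring
      · rw [hnext]
        have : |Λ * (Λ ^ n * (x - η j))| < ε := by
          rw [abs_mul]
          have h1 : |Λ ^ n * (x - η j)| < ε := by
            have := ihb; rw [ihf] at this; simpa using this
          nlinarith [abs_nonneg (Λ ^ n * (x - η j)), abs_nonneg Λ]
        simpa using this
  have htend : Filter.Tendsto (fun n => η j + Λ ^ n * (x - η j)) Filter.atTop (nhds (η j)) := by
    have h0 : Filter.Tendsto (fun n => Λ ^ n) Filter.atTop (nhds 0) :=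
      tendsto_pow_atTop_nhds_zero_of_abs_lt_one hΛabs
    have := (h0.mul_const (x - η j)).const_add (η j)
    simpa using this
  exact htend.congr (fun n => ((hform n).1).symm)
end

section
/- Let H ≥ 2, T ≥ 1 and (H^T − 1/H)/(H^T − 1) < ϑ < H^T/(H^T − 1). Then for the controlled map F: if x_0 ≤ 0 or x_0 ≥ 1, then F^k(x_0) → 0 as k → ∞; and if x_0 ∈ (0, 1), then either F^k(x_0) → 0 as k → ∞, or F^k(x_0) ∈ (0, 1) for all k ≥ 1. -/
lemma tent_iter_nonpos (H : ℝ) (hH : 0 ≤ H) (n : ℕ) {x : ℝ} (hx : x ≤ 0) :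
    (tent H)^[n] x = H ^ n * x := by
  induction n generalizing x with
  | zero => simp
  | succ n ih =>
    rw [Function.iterate_succ_apply]
    have hx2 : tent H x = H * x := by
      unfold tent; rw [if_pos (by linarith)]
    have hHx : H * x ≤ 0 := mul_nonpos_iff.mpr (Or.inl ⟨hH, hx⟩)
    rw [hx2, ih hHx]
    ring

lemma ctrl_of_nonpos (H : ℝ) (hH : 2 ≤ H) (T : ℕ) (ϑ : ℝ)
    (hc : 0 ≤ H ^ T - ϑ * (H ^ T - 1)) {x : ℝ} (hx : x ≤ 0) :
    ctrl H T ϑ x = H * (H ^ T - ϑ * (H ^ T - 1)) * x := by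
  have h0 : (0:ℝ) ≤ H := by linarith
  unfold ctrl
  rw [tent_iter_nonpos H h0 T hx]
  have harg : ϑ * x + (1 - ϑ) * (H ^ T * x) = (H ^ T - ϑ * (H ^ T - 1)) * x := by ring
  rw [harg]
  unfold tent
  rw [if_pos (by nlinarith : (H ^ T - ϑ * (H ^ T - 1)) * x ≤ 1 / 2)]
  ring

lemma ctrl_iter_nonpos (H : ℝ) (hH : 2 ≤ H) (T : ℕ) (ϑ : ℝ)
    (hc : 0 ≤ H ^ T - ϑ * (H ^ T - 1)) (k : ℕ) {x : ℝ} (hx : x ≤ 0) :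
    (ctrl H T ϑ)^[k] x = (H * (H ^ T - ϑ * (H ^ T - 1))) ^ k * x := by
  induction k generalizing x with
  | zero => simp
  | succ k ih =>
    have h1 : 0 ≤ H * (H ^ T - ϑ * (H ^ T - 1)) := mul_nonneg (by linarith) hc
    have h2 : H * (H ^ T - ϑ * (H ^ T - 1)) * x ≤ 0 :=
      mul_nonpos_iff.mpr (Or.inl ⟨h1, hx⟩)
    rw [Function.iterate_succ_apply, ctrl_of_nonpos H hH T ϑ hc hx, ih h2]
    ring

lemma tendsto_of_nonpos (H : ℝ) (hH : 2 ≤ H) (T : ℕ) (ϑ : ℝ)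
    (hc0 : 0 ≤ H ^ T - ϑ * (H ^ T - 1))
    (hc1 : H * (H ^ T - ϑ * (H ^ T - 1)) < 1) {x : ℝ} (hx : x ≤ 0) :
    Filter.Tendsto (fun k => (ctrl H T ϑ)^[k] x) Filter.atTop (nhds 0) := by
  have heq : ∀ k, (ctrl H T ϑ)^[k] x = (H * (H ^ T - ϑ * (H ^ T - 1))) ^ k * x :=
    fun k => ctrl_iter_nonpos H hH T ϑ hc0 k hx
  simp_rw [heq]
  have habs : |H * (H ^ T - ϑ * (H ^ T - 1))| < 1 := by
    rw [abs_of_nonneg (mul_nonneg (by linarith) hc0)]; exact hc1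
  simpa using (tendsto_pow_atTop_nhds_zero_of_abs_lt_one habs).mul_const x

lemma tendsto_of_out (H : ℝ) (hH : 2 ≤ H) (T : ℕ) (hT : 1 ≤ T)
    (ϑ : ℝ) (hϑ1 : (H ^ T - 1 / H) / (H ^ T - 1) < ϑ) (hϑ2 : ϑ < H ^ T / (H ^ T - 1))
    {x : ℝ} (hx : x ≤ 0 ∨ 1 ≤ x) :
    Filter.Tendsto (fun k => (ctrl H T ϑ)^[k] x) Filter.atTop (nhds 0) := by
  have hH0 : (0:ℝ) < H := by linarith
  have hP : H ≤ H ^ T := le_self_pow₀ (by linarith) (by omega)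
  have hP1 : (1:ℝ) < H ^ T := by linarith
  have hP0 : (0:ℝ) < H ^ T - 1 := by linarith
  have h1H : 1 / H < 1 := by rw [div_lt_one hH0]; linarith
  -- ϑ > 1
  have hϑgt1 : 1 < ϑ := by
    have : (1:ℝ) < (H ^ T - 1 / H) / (H ^ T - 1) := by
      rw [lt_div_iff₀ hP0]; linarith
    linarith
  -- bounds on c
  have hb1 : H ^ T - 1 / H < ϑ * (H ^ T - 1) := by
    have := (div_lt_iff₀ hP0).mp hϑ1
    linarith
  have hb2 : ϑ * (H ^ T - 1) < H ^ T := by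
    have := (lt_div_iff₀ hP0).mp hϑ2
    linarith
  have hc0 : 0 ≤ H ^ T - ϑ * (H ^ T - 1) := by linarith
  have hc1 : H * (H ^ T - ϑ * (H ^ T - 1)) < 1 := by
    have h2 : H ^ T - ϑ * (H ^ T - 1) < 1 / H := by linarith
    have := mul_lt_mul_of_pos_left h2 hH0
    rwa [mul_one_div, div_self (ne_of_gt hH0)] at this
  rcases hx with hx | hx
  · exact tendsto_of_nonpos H hH T ϑ hc0 hc1 hx
  · -- x ≥ 1 : show ctrl x ≤ 0 and reduce to the nonpositive case
    have hx2 : ¬ (x ≤ 1 / 2) := by linarith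
    obtain ⟨m, rfl⟩ : ∃ m, T = m + 1 := ⟨T - 1, by omega⟩
    have hfx : tent H x = H * (1 - x) := by unfold tent; rw [if_neg hx2]
    have hfx0 : H * (1 - x) ≤ 0 := mul_nonpos_iff.mpr (Or.inl ⟨by linarith, by linarith⟩)
    have hiter : (tent H)^[m + 1] x = H ^ (m + 1) * (1 - x) := by
      rw [Function.iterate_succ_apply, hfx, tent_iter_nonpos H (by linarith) m hfx0]
      ring
    have hPnn : (0:ℝ) ≤ H ^ (m + 1) := by positivity
    have hprod : 0 ≤ (ϑ - 1) * (H ^ (m + 1) * (x - 1)) :=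
      mul_nonneg (by linarith) (mul_nonneg hPnn (by linarith))
    set a : ℝ := ϑ * x + (1 - ϑ) * (H ^ (m + 1) * (1 - x)) with ha
    have haϑ : ϑ ≤ a := by
      have hx' : ϑ * 1 ≤ ϑ * x := by nlinarith
      have : a = ϑ * x + (ϑ - 1) * (H ^ (m + 1) * (x - 1)) := by ring
      rw [this]; nlinarith
    have hctrl : ctrl H (m + 1) ϑ x = H * (1 - a) := by
      unfold ctrl
      rw [hiter]
      unfold tent
      rw [if_neg (by push_neg; linarith)]
    have hctrl0 : ctrl H (m + 1) ϑ x ≤ 0 := by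
      rw [hctrl]
      exact mul_nonpos_iff.mpr (Or.inl ⟨by linarith, by linarith⟩)
    have hy := tendsto_of_nonpos H hH (m + 1) ϑ hc0 hc1 hctrl0
    rw [← Filter.tendsto_add_atTop_iff_nat 1]
    simp_rw [Function.iterate_succ_apply]
    exact hy

theorem ctrl_orbits_lower_half_interval (H : ℝ) (hH : 2 ≤ H) (T : ℕ) (hT : 1 ≤ T)
    (ϑ : ℝ) (hϑ1 : (H ^ T - 1 / H) / (H ^ T - 1) < ϑ) (hϑ2 : ϑ < H ^ T / (H ^ T - 1))
    (x₀ : ℝ) :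
    ((x₀ ≤ 0 ∨ 1 ≤ x₀) →
      Filter.Tendsto (fun k => (ctrl H T ϑ)^[k] x₀) Filter.atTop (nhds 0)) ∧
    (x₀ ∈ Set.Ioo (0 : ℝ) 1 →
      (Filter.Tendsto (fun k => (ctrl H T ϑ)^[k] x₀) Filter.atTop (nhds 0) ∨
        ∀ k : ℕ, 1 ≤ k → (ctrl H T ϑ)^[k] x₀ ∈ Set.Ioo (0 : ℝ) 1)) := by
  constructor
  · exact fun hx => tendsto_of_out H hH T hT ϑ hϑ1 hϑ2 hx
  · intro _
    by_cases hall : ∀ k : ℕ, 1 ≤ k → (ctrl H T ϑ)^[k] x₀ ∈ Set.Ioo (0 : ℝ) 1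
    · exact Or.inr hall
    · left
      push_neg at hall
      obtain ⟨k, hk1, hk2⟩ := hall
      rw [Set.mem_Ioo, not_and_or, not_lt, not_lt] at hk2
      have hy : (ctrl H T ϑ)^[k] x₀ ≤ 0 ∨ 1 ≤ (ctrl H T ϑ)^[k] x₀ := hk2
      have hy' := tendsto_of_out H hH T hT ϑ hϑ1 hϑ2 hy
      rw [← Filter.tendsto_add_atTop_iff_nat k]
      simp_rw [Function.iterate_add_apply]
      exact hy'
end

section
/- Let H ≥ 2, T ≥ 1 and H^T/(H^T − 1) < ϑ < (H^T + 1/H)/(H^T − 1). Then for the controlled map F: if −H² + H/2 ≤ x_0 ≤ H/2, then −H² + H/2 ≤ F^k(x_0) ≤ H/2 for all k ≥ 1; and if x_0 > H/2 or x_0 < −H² + H/2, then there exists k_0 ≥ 0 such that −H² + H/2 ≤ F^k(x_0) ≤ H/2 for all k > k_0. -/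
section Aux

variable {H : ℝ}

lemma tent_le_half (hH : 2 ≤ H) (y : ℝ) : tent H y ≤ H / 2 := by
  unfold tent; split <;> nlinarith

lemma ctrl_le_half (hH : 2 ≤ H) (T : ℕ) (ϑ x : ℝ) : ctrl H T ϑ x ≤ H / 2 :=
  tent_le_half hH _

lemma tent_ge (hH : 2 ≤ H) {y : ℝ} (h1 : 1 / 2 - H ≤ y) (h2 : y ≤ 1 / 2 + H) :
    -H ^ 2 + H / 2 ≤ tent H y := by
  unfold tent; split <;> nlinarith

lemma iter_nonpos (hH : 2 ≤ H) {x : ℝ} (hx : x ≤ 0) (k : ℕ) :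
    (tent H)^[k] x = H ^ k * x := by
  induction k with
  | zero => simp
  | succ k ih =>
    rw [Function.iterate_succ_apply', ih]
    have hp : (0:ℝ) ≤ H ^ k := pow_nonneg (by linarith) k
    have h0 : H ^ k * x ≤ 0 := mul_nonpos_of_nonneg_of_nonpos hp hx
    unfold tent
    rw [if_pos (by linarith)]
    ring

lemma iter_interval (hH : 2 ≤ H) {x : ℝ} (hx0 : 0 ≤ x) (hx : x ≤ H / 2) (k : ℕ) :
    H ^ k * (1 - H / 2) ≤ (tent H)^[k] x ∧ (tent H)^[k] x ≤ H / 2 := by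
  induction k with
  | zero => simp only [Function.iterate_zero_apply, pow_zero, one_mul]; exact ⟨by linarith, hx⟩
  | succ k ih =>
    obtain ⟨h1, h2⟩ := ih
    rw [Function.iterate_succ_apply', pow_succ]
    set y := (tent H)^[k] x with hy
    have hk1 : (1:ℝ) ≤ H ^ k := one_le_pow₀ (by linarith)
    unfold tent
    split
    · next h =>
      constructor
      · nlinarith [mul_le_mul_of_nonneg_left h1 (show (0:ℝ) ≤ H by linarith)]
      · nlinarith
    · next h =>
      push_neg at h
      constructor
      · nlinarith [mul_nonneg (by linarith : (0:ℝ) ≤ H ^ k - 1)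
          (by nlinarith : (0:ℝ) ≤ H * (H / 2 - 1)),
          mul_nonneg (by linarith : (0:ℝ) ≤ H / 2 - y) (by linarith : (0:ℝ) ≤ H)]
      · nlinarith

lemma theta_facts (hH : 2 ≤ H) {T : ℕ} (hT : 1 ≤ T) {ϑ : ℝ}
    (hϑ1 : H ^ T / (H ^ T - 1) < ϑ) (hϑ2 : ϑ < (H ^ T + 1 / H) / (H ^ T - 1)) :
    H ^ T < ϑ * (H ^ T - 1) ∧ H * (ϑ * (H ^ T - 1)) < H * H ^ T + 1 := by
  have hH0 : (0:ℝ) < H := by linarith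
  have hP1 : (1:ℝ) < H ^ T := one_lt_pow₀ (by linarith) (by omega)
  have hP0 : (0:ℝ) < H ^ T - 1 := by linarith
  have hA : H ^ T < ϑ * (H ^ T - 1) := (div_lt_iff₀ hP0).mp hϑ1
  have hB : ϑ * (H ^ T - 1) < H ^ T + 1 / H := (lt_div_iff₀ hP0).mp hϑ2
  have h1 : H * (1 / H) = 1 := by field_simp
  exact ⟨hA, by nlinarith⟩

lemma arg_bounds (hH : 2 ≤ H) {T : ℕ} (hT : 1 ≤ T) {ϑ : ℝ}
    (hϑ1 : H ^ T / (H ^ T - 1) < ϑ) (hϑ2 : ϑ < (H ^ T + 1 / H) / (H ^ T - 1))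
    {x : ℝ} (hx1 : -H ^ 2 + H / 2 ≤ x) (hx2 : x ≤ H / 2) :
    1 / 2 - H ≤ ϑ * x + (1 - ϑ) * (tent H)^[T] x ∧
      ϑ * x + (1 - ϑ) * (tent H)^[T] x ≤ 1 / 2 + H := by
  have hH0 : (0:ℝ) < H := by linarith
  have hP1 : (1:ℝ) < H ^ T := one_lt_pow₀ (by linarith) (by omega)
  have hP0 : (0:ℝ) < H ^ T - 1 := by linarith
  have hPH : H ≤ H ^ T := le_self_pow₀ (by linarith) (by omega)
  obtain ⟨hA, hB'⟩ := theta_facts hH hT hϑ1 hϑ2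
  rcases le_or_gt x 0 with hx0 | hx0
  · rw [iter_nonpos hH hx0]
    constructor
    · nlinarith [mul_nonneg (by linarith : (0:ℝ) ≤ ϑ * (H ^ T - 1) - H ^ T)
        (by linarith : (0:ℝ) ≤ -x)]
    · nlinarith [mul_nonneg
        (by linarith : (0:ℝ) ≤ H * H ^ T + 1 - H * (ϑ * (H ^ T - 1)))
        (by linarith : (0:ℝ) ≤ -x), hH0]
  · obtain ⟨hy1, hy2⟩ := iter_interval hH hx0.le hx2 T
    generalize hgen : (tent H)^[T] x = y at hy1 hy2 ⊢
    have ha : 0 < ϑ - 1 := by nlinarith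
    have h3 : H * (H ^ T - 1) * (ϑ - 1) < H + 1 := by nlinarith
    have hHP0 : (0:ℝ) < H * (H ^ T - 1) := mul_pos hH0 hP0
    have hB2 : ϑ - 1 ≤ (H + 1) / (H * (H ^ T - 1)) := by
      rw [le_div_iff₀ hHP0]; nlinarith
    have hM : (0:ℝ) ≤ H / 2 - H ^ T * (1 - H / 2) := by nlinarith
    constructor
    · -- lower bound
      have l1 : (ϑ - 1) * (-(H / 2)) ≤ (ϑ - 1) * (x - y) :=
        mul_le_mul_of_nonneg_left (by linarith) ha.le
      have l3 : (ϑ - 1) * (H / 2) ≤ (H + 1) / (H * (H ^ T - 1)) * (H / 2) :=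
        mul_le_mul_of_nonneg_right hB2 (by linarith)
      have l2 : (H + 1) / (H * (H ^ T - 1)) * (H / 2) ≤ H - 1 / 2 := by
        rw [div_mul_eq_mul_div, div_le_iff₀ hHP0]
        nlinarith [mul_le_mul_of_nonneg_left (by linarith : H - 1 ≤ H ^ T - 1)
          (by linarith : (0:ℝ) ≤ H - 1 / 2)]
      linarith [l1, l3, l2, hx0.le]
    · -- upper bound
      have had : (ϑ - 1) * (x - y) ≤ (ϑ - 1) * (H / 2 - H ^ T * (1 - H / 2)) :=
        mul_le_mul_of_nonneg_left (by linarith) ha.le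
      have h5 : (ϑ - 1) * (H / 2 - H ^ T * (1 - H / 2)) ≤
          (H + 1) / (H * (H ^ T - 1)) * (H / 2 - H ^ T * (1 - H / 2)) :=
        mul_le_mul_of_nonneg_right hB2 hM
      have hBM : (H + 1) / (H * (H ^ T - 1)) * (H / 2 - H ^ T * (1 - H / 2)) ≤ (H + 1) / 2 := by
        rw [div_mul_eq_mul_div, div_le_div_iff₀ hHP0 (by norm_num : (0:ℝ) < 2)]
        linarith [mul_nonneg (show (0:ℝ) ≤ H + 1 by linarith)
          (show (0:ℝ) ≤ H ^ T - H by linarith)]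
      linarith [had, h5, hBM, hx2]

lemma ctrl_mem (hH : 2 ≤ H) {T : ℕ} (hT : 1 ≤ T) {ϑ : ℝ}
    (hϑ1 : H ^ T / (H ^ T - 1) < ϑ) (hϑ2 : ϑ < (H ^ T + 1 / H) / (H ^ T - 1))
    {x : ℝ} (hx1 : -H ^ 2 + H / 2 ≤ x) (hx2 : x ≤ H / 2) :
    -H ^ 2 + H / 2 ≤ ctrl H T ϑ x ∧ ctrl H T ϑ x ≤ H / 2 := by
  obtain ⟨h1, h2⟩ := arg_bounds hH hT hϑ1 hϑ2 hx1 hx2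
  exact ⟨tent_ge hH h1 h2, tent_le_half hH _⟩

lemma ctrl_iter_mem (hH : 2 ≤ H) {T : ℕ} (hT : 1 ≤ T) {ϑ : ℝ}
    (hϑ1 : H ^ T / (H ^ T - 1) < ϑ) (hϑ2 : ϑ < (H ^ T + 1 / H) / (H ^ T - 1))
    {x : ℝ} (hx1 : -H ^ 2 + H / 2 ≤ x) (hx2 : x ≤ H / 2) (k : ℕ) :
    -H ^ 2 + H / 2 ≤ (ctrl H T ϑ)^[k] x ∧ (ctrl H T ϑ)^[k] x ≤ H / 2 := by
  induction k with
  | zero => exact ⟨hx1, hx2⟩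
  | succ k ih =>
    rw [Function.iterate_succ_apply']
    exact ctrl_mem hH hT hϑ1 hϑ2 ih.1 ih.2

lemma ctrl_step (hH : 2 ≤ H) {T : ℕ} (hT : 1 ≤ T) {ϑ : ℝ}
    (hϑ1 : H ^ T / (H ^ T - 1) < ϑ) (hϑ2 : ϑ < (H ^ T + 1 / H) / (H ^ T - 1))
    {x : ℝ} (hx : x < -H ^ 2 + H / 2) :
    x + H ≤ ctrl H T ϑ x := by
  have hH0 : (0:ℝ) < H := by linarith
  have hx0 : x ≤ 0 := by nlinarith
  have hP1 : (1:ℝ) < H ^ T := one_lt_pow₀ (by linarith) (by omega)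
  obtain ⟨hA, hB'⟩ := theta_facts hH hT hϑ1 hϑ2
  unfold ctrl
  rw [iter_nonpos hH hx0]
  have hg0 : 0 ≤ ϑ * x + (1 - ϑ) * (H ^ T * x) := by
    nlinarith [mul_nonneg (by linarith : (0:ℝ) ≤ ϑ * (H ^ T - 1) - H ^ T)
      (by linarith : (0:ℝ) ≤ -x)]
  have hg1 : H * (ϑ * x + (1 - ϑ) * (H ^ T * x)) ≤ -x := by
    nlinarith [mul_nonneg
      (by linarith : (0:ℝ) ≤ H * H ^ T + 1 - H * (ϑ * (H ^ T - 1)))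
      (by linarith : (0:ℝ) ≤ -x)]
  unfold tent
  split
  · nlinarith [mul_nonneg hH0.le hg0]
  · nlinarith [hg1]

lemma ctrl_escape (hH : 2 ≤ H) {T : ℕ} (hT : 1 ≤ T) {ϑ : ℝ}
    (hϑ1 : H ^ T / (H ^ T - 1) < ϑ) (hϑ2 : ϑ < (H ^ T + 1 / H) / (H ^ T - 1)) :
    ∀ n : ℕ, ∀ x : ℝ, x ≤ H / 2 → -H ^ 2 + H / 2 - n * H ≤ x →
      ∃ k : ℕ, -H ^ 2 + H / 2 ≤ (ctrl H T ϑ)^[k] x ∧ (ctrl H T ϑ)^[k] x ≤ H / 2 := by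
  intro n
  induction n with
  | zero =>
    intro x h1 h2
    refine ⟨0, ?_, h1⟩
    simpa using by push_cast at h2; linarith
  | succ n ih =>
    intro x h1 h2
    rcases le_or_gt (-H ^ 2 + H / 2) x with h | h
    · exact ⟨0, h, h1⟩
    · have hs1 := ctrl_step hH hT hϑ1 hϑ2 h
      have hs2 := ctrl_le_half hH T ϑ x
      push_cast at h2
      obtain ⟨k, hk⟩ := ih (ctrl H T ϑ x) hs2 (by push_cast; linarith)
      exact ⟨k + 1, by rwa [Function.iterate_succ_apply]⟩

end Aux

theorem ctrl_orbits_upper_half_interval (H : ℝ) (hH : 2 ≤ H) (T : ℕ) (hT : 1 ≤ T)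
    (ϑ : ℝ) (hϑ1 : H ^ T / (H ^ T - 1) < ϑ) (hϑ2 : ϑ < (H ^ T + 1 / H) / (H ^ T - 1))
    (x₀ : ℝ) :
    (-H ^ 2 + H / 2 ≤ x₀ ∧ x₀ ≤ H / 2 →
      ∀ k : ℕ, 1 ≤ k → -H ^ 2 + H / 2 ≤ (ctrl H T ϑ)^[k] x₀ ∧ (ctrl H T ϑ)^[k] x₀ ≤ H / 2) ∧
    (H / 2 < x₀ ∨ x₀ < -H ^ 2 + H / 2 →
      ∃ k₀ : ℕ, ∀ k : ℕ, k₀ < k →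
        -H ^ 2 + H / 2 ≤ (ctrl H T ϑ)^[k] x₀ ∧ (ctrl H T ϑ)^[k] x₀ ≤ H / 2) := by
  have hH0 : (0:ℝ) < H := by linarith
  have key : ∀ y : ℝ, y ≤ H / 2 →
      ∃ k : ℕ, -H ^ 2 + H / 2 ≤ (ctrl H T ϑ)^[k] y ∧ (ctrl H T ϑ)^[k] y ≤ H / 2 := by
    intro y hy
    obtain ⟨n, hn⟩ := exists_nat_ge ((-H ^ 2 + H / 2 - y) / H)
    refine ctrl_escape hH hT hϑ1 hϑ2 n y hy ?_
    have := (div_le_iff₀ hH0).mp hn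
    linarith
  constructor
  · rintro ⟨hx1, hx2⟩ k _
    exact ctrl_iter_mem hH hT hϑ1 hϑ2 hx1 hx2 k
  · intro hcase
    rcases hcase with hc | hc
    · obtain ⟨k, hk1, hk2⟩ := key (ctrl H T ϑ x₀) (ctrl_le_half hH T ϑ x₀)
      refine ⟨k + 1, fun j hj => ?_⟩
      have hj' : j = (j - (k + 1)) + (k + 1) := by omega
      rw [hj', Function.iterate_add_apply]
      have hb : (ctrl H T ϑ)^[k + 1] x₀ = (ctrl H T ϑ)^[k] (ctrl H T ϑ x₀) :=
        Function.iterate_succ_apply _ _ _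
      rw [hb]
      exact ctrl_iter_mem hH hT hϑ1 hϑ2 hk1 hk2 _
    · obtain ⟨k, hk1, hk2⟩ := key x₀ (by nlinarith)
      refine ⟨k, fun j hj => ?_⟩
      have hj' : j = (j - k) + k := by omega
      rw [hj', Function.iterate_add_apply]
      exact ctrl_iter_mem hH hT hϑ1 hϑ2 hk1 hk2 _
end

section
/- Let H ≥ 2, T ≥ 1 and (H^T − 1/H)/(H^T + 1) < ϑ < (H^T + 1/H)/(H^T + 1). If x_0 < 0, then the iterates of the controlled map satisfy F^k(x_0) < H^k·x_0 for all k ≥ 1; in particular F^k(x_0) → −∞ as k → ∞. -/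
lemma tent_of_neg (H x : ℝ) (hx : x < 0) : tent H x = H * x := by
  unfold tent
  rw [if_pos (by linarith)]

lemma tent_iter_of_neg (H : ℝ) (hH : 0 < H) (n : ℕ) (x : ℝ) (hx : x < 0) :
    (tent H)^[n] x = H ^ n * x := by
  induction n with
  | zero => simp
  | succ n ih =>
    rw [Function.iterate_succ_apply', ih, tent_of_neg]
    · ring
    · exact mul_neg_of_pos_of_neg (pow_pos hH n) hx

theorem ctrl_negative_initial_diverges (H : ℝ) (hH : 2 ≤ H) (T : ℕ) (hT : 1 ≤ T)
    (ϑ : ℝ) (hϑ1 : (H ^ T - 1 / H) / (H ^ T + 1) < ϑ) (hϑ2 : ϑ < (H ^ T + 1 / H) / (H ^ T + 1))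
    (x₀ : ℝ) (hx₀ : x₀ < 0) :
    (∀ k : ℕ, 1 ≤ k → (ctrl H T ϑ)^[k] x₀ < H ^ k * x₀) ∧
    Filter.Tendsto (fun k => (ctrl H T ϑ)^[k] x₀) Filter.atTop Filter.atBot := by
  have hH0 : (0:ℝ) < H := by linarith
  set c : ℝ := ϑ + (1 - ϑ) * H ^ T with hc
  have hHT : (2:ℝ) ≤ H ^ T := by
    calc (2:ℝ) ≤ H := hH
    _ = H ^ 1 := (pow_one H).symm
    _ ≤ H ^ T := pow_le_pow_right₀ (by linarith) hT
  have hden : (0:ℝ) < H ^ T + 1 := by linarith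
  have hϑlt1 : ϑ < 1 := by
    have : (H ^ T + 1 / H) / (H ^ T + 1) < 1 := by
      rw [div_lt_one hden]
      have : 1 / H ≤ 1 / 2 := by
        apply one_div_le_one_div_of_le <;> linarith
      linarith
    linarith
  have hc1 : 1 < c := by
    have h1 : 0 < (1 - ϑ) * (H ^ T - 1) := by
      apply mul_pos <;> linarith
    have : c - 1 = (1 - ϑ) * (H ^ T - 1) := by rw [hc]; ring
    linarith
  have hc0 : 0 < c := by linarith
  have hHc1 : 1 < H * c := by nlinarith
  -- the controlled map on negatives
  have key : ∀ x : ℝ, x < 0 → ctrl H T ϑ x = H * c * x := by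
    intro x hx
    unfold ctrl
    rw [tent_iter_of_neg H hH0 T x hx]
    have harg : ϑ * x + (1 - ϑ) * (H ^ T * x) = c * x := by rw [hc]; ring
    rw [harg, tent_of_neg _ _ (mul_neg_of_pos_of_neg hc0 hx)]
    ring
  have iter_eq : ∀ k : ℕ, (ctrl H T ϑ)^[k] x₀ = (H * c) ^ k * x₀ := by
    intro k
    induction k with
    | zero => simp
    | succ k ih =>
      rw [Function.iterate_succ_apply', ih,
        key _ (mul_neg_of_pos_of_neg (pow_pos (by linarith) k) hx₀)]
      ring
  constructor
  · intro k hk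
    rw [iter_eq, mul_pow]
    have hck : 1 < c ^ k := one_lt_pow₀ hc1 (by omega)
    have hHk : 0 < H ^ k := pow_pos hH0 k
    nlinarith [mul_neg_of_pos_of_neg (mul_pos hHk (sub_pos.mpr hck)) hx₀]
  · simp only [iter_eq]
    have h1 : Filter.Tendsto (fun k : ℕ => (H * c) ^ k) Filter.atTop Filter.atTop :=
      tendsto_pow_atTop_atTop_of_one_lt hHc1
    have := h1.atTop_mul_const_of_neg hx₀
    simpa using this
end

section
/- Let H ≥ 2, T ≥ 1, let τ be a positive divisor of T and set p = T/τ. Suppose the control parameter satisfies (H^T − 1/H)/(H^T − 1) < ϑ < (H^T + 1/H)/(H^T − 1). Let (η̂_1, …, η̂_τ) be a τ-cycle of the generalized tent map f with η̂_j ≠ 1/2 for all j and multiplier μ_τ = (f^τ)'(η̂_1). If μ_τ > 0, or if μ_τ < 0 and p is even, then |μ_τ·(ϑ + (1 − ϑ)·μ_τ^p)^τ| < 1 and (η̂_1, …, η̂_τ) is a locally asymptotically stable τ-cycle of the controlled map F (with prediction horizon T). -/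
/-- slope sign of the tent map -/
noncomputable def tsgn (y : ℝ) : ℝ := if y ≤ 1 / 2 then 1 else -1

lemma tsgn_eq (y : ℝ) : tsgn y = 1 ∨ tsgn y = -1 := by
  unfold tsgn; split <;> simp

lemma abs_tsgn (y : ℝ) : |tsgn y| = 1 := by
  rcases tsgn_eq y with h | h <;> rw [h] <;> norm_num

/-- the tent map is locally affine away from `1/2` -/
lemma tent_local (H : ℝ) {y : ℝ} (hy : y ≠ 1 / 2) :
    ∃ δ > 0, ∀ x, |x - y| < δ → tent H x = tent H y + tsgn y * H * (x - y) := by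
  rcases lt_or_gt_of_ne hy with h | h
  · refine ⟨1 / 2 - y, by linarith, fun x hx => ?_⟩
    have hx' : x ≤ 1 / 2 := by
      have := abs_lt.mp hx; linarith [this.2]
    have hy' : y ≤ 1 / 2 := le_of_lt h
    simp only [tent, tsgn, if_pos hx', if_pos hy']
    ring
  · refine ⟨y - 1 / 2, by linarith, fun x hx => ?_⟩
    have hx' : ¬ x ≤ 1 / 2 := by
      have := abs_lt.mp hx; push_neg; linarith [this.1]
    have hy' : ¬ y ≤ 1 / 2 := not_le.mpr h
    simp only [tent, tsgn, if_neg hx', if_neg hy']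
    ring

theorem subcycle_LAS_positive_theta_range (H : ℝ) (hH : 2 ≤ H) (T τ : ℕ) (hT : 1 ≤ T)
    (hτ : 1 ≤ τ) (hdvd : τ ∣ T) (p : ℕ) (hp : p = T / τ) (ϑ : ℝ)
    (hϑ1 : (H ^ T - 1 / H) / (H ^ T - 1) < ϑ) (hϑ2 : ϑ < (H ^ T + 1 / H) / (H ^ T - 1))
    (η : ℕ → ℝ) (hcyc : IsCycle (tent H) τ η) (hhalf : ∀ j < τ, η j ≠ 1 / 2)
    (μτ : ℝ) (hμτ : μτ = deriv ((tent H)^[τ]) (η 0))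
    (hcase : 0 < μτ ∨ (μτ < 0 ∧ Even p)) :
    |μτ * (ϑ + (1 - ϑ) * μτ ^ p) ^ τ| < 1 ∧ CycleLAS (ctrl H T ϑ) τ η := by
  have hτpos : 0 < τ := hτ
  have hH0 : (0:ℝ) < H := by linarith
  have hH1 : (1:ℝ) < H := by linarith
  have hHT : (1:ℝ) < H ^ T := one_lt_pow₀ hH1 (by omega)
  have hd : (0:ℝ) < H ^ T - 1 := by linarith
  -- the effective inner slope
  set a : ℝ := ϑ + (1 - ϑ) * H ^ T with ha_def
  have hb1 : H ^ T - 1 / H < ϑ * (H ^ T - 1) := (div_lt_iff₀ hd).mp hϑ1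
  have hb2 : ϑ * (H ^ T - 1) < H ^ T + 1 / H := (lt_div_iff₀ hd).mp hϑ2
  have hHinv : (0:ℝ) < 1 / H := by positivity
  have ha : |a| < 1 / H := by
    rw [abs_lt]
    constructor <;> [nlinarith; nlinarith]
  set r : ℝ := H * |a| with hr_def
  have hr0 : 0 ≤ r := by positivity
  have hr1 : r < 1 := by
    have := mul_lt_mul_of_pos_left ha hH0
    have hH' : H * (1 / H) = 1 := by field_simp
    rw [hH'] at this; exact this
  have haone : |a| ≤ 1 := by
    have h1H : 1 / H ≤ 1 := by
      rw [div_le_one hH0]; linarith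
    linarith
  -- periodicity of η
  have hstep0 : ∀ j, η (j + 1) = tent H (η j) := hcyc.2.1
  have hper : ∀ j, η (j + τ) = η j := by
    intro j
    induction j with
    | zero => simpa using hcyc.2.2
    | succ j ih =>
      have e : j + 1 + τ = (j + τ) + 1 := by omega
      rw [e, hstep0, ih, ← hstep0]
  have hperm : ∀ j n, η (j + n * τ) = η j := by
    intro j n
    induction n with
    | zero => simp
    | succ n ih =>
      have e : j + (n + 1) * τ = (j + n * τ) + τ := by ring
      rw [e, hper, ih]
  have hmod : ∀ j, η j = η (j % τ) := by
    intro j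
    conv_lhs => rw [← Nat.mod_add_div j τ]
    rw [Nat.mul_comm τ (j / τ), hperm]
  have hhalf' : ∀ j, η j ≠ 1 / 2 := by
    intro j
    rw [hmod j]
    exact hhalf _ (Nat.mod_lt _ hτpos)
  -- the sign products
  set S : ℕ → ℕ → ℝ := fun j k => ∏ i ∈ Finset.range k, tsgn (η (j + i)) with hS_def
  have memS : ∀ j k, S j k = 1 ∨ S j k = -1 := by
    intro j k
    induction k with
    | zero => left; simp [hS_def]
    | succ k ih =>
      have e : S j (k + 1) = S j k * tsgn (η (j + k)) := Finset.prod_range_succ _ _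
      rcases ih with h | h <;> rcases tsgn_eq (η (j + k)) with h' | h' <;>
        rw [e, h, h'] <;> norm_num
  have absS : ∀ j k, |S j k| = 1 := by
    intro j k
    rcases memS j k with h | h <;> rw [h] <;> norm_num
  have Sne : ∀ j k, S j k ≠ 0 := by
    intro j k
    rcases memS j k with h | h <;> rw [h] <;> norm_num
  have Sadd : ∀ j m n, S j (m + n) = S j m * S (j + m) n := by
    intro j m n
    rw [hS_def]
    simp only
    rw [Finset.prod_range_add]
    congr 1
    apply Finset.prod_congr rfl
    intro i _
    have e : j + (m + i) = j + m + i := by omega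
    rw [e]
  have Sper : ∀ j k, S (j + τ) k = S j k := by
    intro j k
    apply Finset.prod_congr rfl
    intro i _
    have e : j + τ + i = (j + i) + τ := by omega
    rw [e, hper]
  have Spern : ∀ j n k, S (j + n * τ) k = S j k := by
    intro j n k
    induction n with
    | zero => simp
    | succ n ih =>
      have e : j + (n + 1) * τ = (j + n * τ) + τ := by ring
      rw [e, Sper, ih]
  have Spow : ∀ j n, S j (n * τ) = (S j τ) ^ n := by
    intro j n
    induction n with
    | zero => simp [hS_def]
    | succ n ih =>
      have e : (n + 1) * τ = n * τ + τ := by ring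
      rw [e, Sadd, ih, Spern, pow_succ]
  have Sτ0 : ∀ j, S j τ = S 0 τ := by
    intro j
    have h1 : S 0 (j + τ) = S 0 j * S j τ := by
      have := Sadd 0 j τ; simpa using this
    have h2 : S 0 (τ + j) = S 0 τ * S 0 j := by
      have := Sadd 0 τ j
      simp only [Nat.zero_add] at this
      rw [this]
      congr 1
      have := Sper 0 j; simpa using this
    rw [Nat.add_comm j τ, h2, mul_comm (S 0 τ) (S 0 j)] at h1
    exact (mul_left_cancel₀ (Sne 0 j) h1.symm)
  -- local affine structure of iterates
  have keyB : ∀ k j, ∃ δ > 0, ∀ x, |x - η j| < δ →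
      (tent H)^[k] x = η (j + k) + S j k * H ^ k * (x - η j) := by
    intro k j
    induction k with
    | zero =>
      refine ⟨1, one_pos, fun x _ => ?_⟩
      simp [hS_def]
    | succ k ih =>
      obtain ⟨δ₁, hδ₁, h₁⟩ := ih
      obtain ⟨δ₂, hδ₂, h₂⟩ := tent_local H (hhalf' (j + k))
      have hHk : (0:ℝ) < H ^ k := by positivity
      refine ⟨min δ₁ (δ₂ / H ^ k), lt_min hδ₁ (by positivity), fun x hx => ?_⟩
      have hx1 : |x - η j| < δ₁ := lt_of_lt_of_le hx (min_le_left _ _)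
      have hx2 : |x - η j| < δ₂ / H ^ k := lt_of_lt_of_le hx (min_le_right _ _)
      have e1 := h₁ x hx1
      have habs : |(tent H)^[k] x - η (j + k)| < δ₂ := by
        rw [e1]
        have : η (j + k) + S j k * H ^ k * (x - η j) - η (j + k)
            = S j k * H ^ k * (x - η j) := by ring
        rw [this, abs_mul, abs_mul, absS, one_mul, abs_of_pos hHk]
        calc H ^ k * |x - η j| < H ^ k * (δ₂ / H ^ k) :=
              mul_lt_mul_of_pos_left hx2 hHk
          _ = δ₂ := by field_simp
      have e2 := h₂ ((tent H)^[k] x) habs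
      rw [Function.iterate_succ_apply', e2, e1]
      have eS : S j (k + 1) = S j k * tsgn (η (j + k)) := Finset.prod_range_succ _ _
      have eη : tent H (η (j + k)) = η (j + k + 1) := (hstep0 (j + k)).symm
      rw [eη, eS]
      have e3 : j + (k + 1) = j + k + 1 := by omega
      rw [e3, pow_succ]
      ring
  -- computing μτ
  obtain ⟨δτ, hδτ, hBτ⟩ := keyB τ 0
  have hμ : μτ = S 0 τ * H ^ τ := by
    rw [hμτ]
    have haff : HasDerivAt (fun x => η 0 + S 0 τ * H ^ τ * (x - η 0))
        (S 0 τ * H ^ τ) (η 0) := by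
      have h1 : HasDerivAt (fun x : ℝ => x - η 0) 1 (η 0) := (hasDerivAt_id _).sub_const _
      have h2 := (h1.const_mul (S 0 τ * H ^ τ)).const_add (η 0)
      simpa using h2
    have hEq : (tent H)^[τ] =ᶠ[nhds (η 0)] fun x => η 0 + S 0 τ * H ^ τ * (x - η 0) := by
      apply Filter.eventuallyEq_of_mem (Metric.ball_mem_nhds (η 0) hδτ)
      intro x hx
      rw [Metric.mem_ball, Real.dist_eq] at hx
      have h0τ : η (0 + τ) = η 0 := by simpa using hcyc.2.2
      rw [hBτ x hx, h0τ]
    exact (haff.congr_of_eventuallyEq hEq).deriv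
  have hTpτ : T = p * τ := by
    rw [hp]; exact (Nat.div_mul_cancel hdvd).symm
  have hSp : (S 0 τ) ^ p = 1 := by
    rcases memS 0 τ with h | h
    · rw [h, one_pow]
    · rcases hcase with hpos | ⟨_, hev⟩
      · exfalso
        rw [hμ, h] at hpos
        have : (0:ℝ) < H ^ τ := by positivity
        nlinarith
      · rw [h]; exact hev.neg_one_pow
  have hST : ∀ j, S j T = 1 := by
    intro j
    rw [hTpτ, Spow, Sτ0, hSp]
  have hμp : μτ ^ p = H ^ T := by
    rw [hμ, mul_pow, hSp, one_mul, ← pow_mul, hTpτ, Nat.mul_comm]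
  have habsμ : |μτ| = H ^ τ := by
    rw [hμ, abs_mul, absS, one_mul, abs_of_pos (by positivity)]
  -- the first conjunct
  have conj1 : |μτ * (ϑ + (1 - ϑ) * μτ ^ p) ^ τ| < 1 := by
    rw [hμp, ← ha_def, abs_mul, habsμ, abs_pow]
    calc H ^ τ * |a| ^ τ = (H * |a|) ^ τ := by rw [mul_pow]
      _ < 1 := pow_lt_one₀ hr0 hr1 (by omega)
  refine ⟨conj1, ?_⟩
  -- local contraction of a single ctrl step
  have keyC : ∀ j, ∃ δ > 0, ∀ x, |x - η j| < δ →
      |ctrl H T ϑ x - η (j + 1)| ≤ r * |x - η j| := by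
    intro j
    obtain ⟨δB, hδB, hB⟩ := keyB T j
    obtain ⟨δA, hδA, hA⟩ := tent_local H (hhalf' j)
    refine ⟨min δB δA, lt_min hδB hδA, fun x hx => ?_⟩
    have hx1 : |x - η j| < δB := lt_of_lt_of_le hx (min_le_left _ _)
    have hx2 : |x - η j| < δA := lt_of_lt_of_le hx (min_le_right _ _)
    have hηT : η (j + T) = η j := by rw [hTpτ, hperm]
    have h1 : (tent H)^[T] x = η j + H ^ T * (x - η j) := by
      rw [hB x hx1, hST, hηT, one_mul]
    have hinner : ϑ * x + (1 - ϑ) * (tent H)^[T] x = η j + a * (x - η j) := by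
      rw [h1, ha_def]; ring
    have habs : |ϑ * x + (1 - ϑ) * (tent H)^[T] x - η j| < δA := by
      rw [hinner]
      have : η j + a * (x - η j) - η j = a * (x - η j) := by ring
      rw [this, abs_mul]
      calc |a| * |x - η j| ≤ 1 * |x - η j| :=
            mul_le_mul_of_nonneg_right haone (abs_nonneg _)
        _ = |x - η j| := one_mul _
        _ < δA := hx2
    have e2 := hA _ habs
    have : ctrl H T ϑ x = η (j + 1) + tsgn (η j) * H * (a * (x - η j)) := by
      rw [ctrl, e2, hinner, hstep0]
      ring
    rw [this]
    have : η (j + 1) + tsgn (η j) * H * (a * (x - η j)) - η (j + 1)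
        = tsgn (η j) * H * (a * (x - η j)) := by ring
    rw [this, abs_mul, abs_mul, abs_mul, abs_tsgn, one_mul, abs_of_pos hH0, hr_def]
    ring_nf
    apply le_of_eq
    ring
  choose δf hδfpos hδf using keyC
  have hne : (Finset.range τ).Nonempty := ⟨0, Finset.mem_range.mpr hτpos⟩
  set δs : ℝ := (Finset.range τ).inf' hne δf with hδs_def
  have hδspos : 0 < δs := by
    rw [hδs_def, Finset.lt_inf'_iff]
    intro j _
    exact hδfpos j
  have hδsle : ∀ j < τ, δs ≤ δf j := fun j hj =>
    Finset.inf'_le _ (Finset.mem_range.mpr hj)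
  -- the uniform single-step contraction
  have hstep : ∀ j x, |x - η j| < δs → |ctrl H T ϑ x - η (j + 1)| ≤ r * |x - η j| := by
    intro j x hx
    have hjm : j % τ < τ := Nat.mod_lt _ hτpos
    have hm1 : η (j + 1) = η (j % τ + 1) := by
      rw [hstep0, hstep0, ← hmod]
    rw [hm1]
    have hxm : |x - η (j % τ)| < δf (j % τ) := by
      rw [← hmod]
      exact lt_of_lt_of_le hx (hδsle _ hjm)
    have := hδf (j % τ) x hxm
    rwa [← hmod] at this
  -- iterated contraction
  have hiter : ∀ j x, |x - η j| < δs → ∀ n,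
      |(ctrl H T ϑ)^[n] x - η (j + n)| ≤ r ^ n * |x - η j| := by
    intro j x hx n
    induction n with
    | zero => simp
    | succ n ih =>
      have hb : |(ctrl H T ϑ)^[n] x - η (j + n)| < δs := by
        calc |(ctrl H T ϑ)^[n] x - η (j + n)| ≤ r ^ n * |x - η j| := ih
          _ ≤ 1 * |x - η j| :=
              mul_le_mul_of_nonneg_right (pow_le_one₀ hr0 hr1.le) (abs_nonneg _)
          _ = |x - η j| := one_mul _
          _ < δs := hx
      have e : j + (n + 1) = (j + n) + 1 := by omega
      rw [e, Function.iterate_succ_apply']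
      calc |ctrl H T ϑ ((ctrl H T ϑ)^[n] x) - η ((j + n) + 1)|
          ≤ r * |(ctrl H T ϑ)^[n] x - η (j + n)| := hstep _ _ hb
        _ ≤ r * (r ^ n * |x - η j|) := mul_le_mul_of_nonneg_left ih hr0
        _ = r ^ (n + 1) * |x - η j| := by ring
  -- local asymptotic stability
  intro j hj
  refine ⟨Metric.ball (η j) δs, Metric.isOpen_ball, Metric.mem_ball_self hδspos, ?_⟩
  intro x hxU
  have hx : |x - η j| < δs := by rwa [Metric.mem_ball, Real.dist_eq] at hxU
  rw [tendsto_iff_dist_tendsto_zero]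
  apply squeeze_zero (g := fun n => r ^ n * |x - η j|) (fun n => dist_nonneg)
  · intro n
    rw [Real.dist_eq]
    have e1 : ((ctrl H T ϑ)^[τ])^[n] x = (ctrl H T ϑ)^[τ * n] x := by
      rw [Function.iterate_mul]
    have e2 : η (j + τ * n) = η j := by
      rw [Nat.mul_comm, hperm]
    rw [e1]
    calc |(ctrl H T ϑ)^[τ * n] x - η j|
        = |(ctrl H T ϑ)^[τ * n] x - η (j + τ * n)| := by rw [e2]
      _ ≤ r ^ (τ * n) * |x - η j| := hiter j x hx (τ * n)
      _ ≤ r ^ n * |x - η j| :=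
          mul_le_mul_of_nonneg_right
            (pow_le_pow_of_le_one hr0 hr1.le (Nat.le_mul_of_pos_left n hτpos))
            (abs_nonneg _)
  · have := (tendsto_pow_atTop_nhds_zero_of_lt_one hr0 hr1).mul_const |x - η j|
    simpa using this
end

section
/- Let H ≥ 2 and T ≥ 1. The set {x ∈ [0, 1] : f^T(x) = x} of fixed points of the T-th iterate of the generalized tent map in [0, 1] has exactly 2^T elements. -/
namespace TentAux

/-- Inverse branches of the tent map. -/
noncomputable def g (H : ℝ) : Bool → ℝ → ℝ
  | false, y => y / H
  | true, y => 1 - y / H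

lemma g_false (H y : ℝ) : g H false y = y / H := rfl
lemma g_true (H y : ℝ) : g H true y = 1 - y / H := rfl

/-- Composition of inverse branches along a list of symbols. -/
noncomputable def Gl (H : ℝ) (s : List Bool) (y : ℝ) : ℝ := s.foldr (g H) y

lemma Gl_nil (H : ℝ) (y : ℝ) : Gl H [] y = y := rfl

lemma Gl_cons (H : ℝ) (b : Bool) (s : List Bool) (y : ℝ) :
    Gl H (b :: s) y = g H b (Gl H s y) := rfl

variable {H : ℝ}

lemma g_false_le (hH : 2 ≤ H) {y : ℝ} (hy : y ∈ Set.Icc (0:ℝ) 1) :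
    g H false y ≤ 1 / 2 := by
  have hH0 : (0:ℝ) < H := by linarith
  rw [g_false]
  rw [div_le_iff₀ hH0]
  nlinarith [hy.1, hy.2]

lemma g_true_ge (hH : 2 ≤ H) {y : ℝ} (hy : y ∈ Set.Icc (0:ℝ) 1) :
    1 / 2 ≤ g H true y := by
  have hH0 : (0:ℝ) < H := by linarith
  have : y / H ≤ 1 / 2 := by rw [div_le_iff₀ hH0]; nlinarith [hy.1, hy.2]
  rw [g_true]
  linarith

lemma g_mem (hH : 2 ≤ H) {b : Bool} {y : ℝ} (hy : y ∈ Set.Icc (0:ℝ) 1) :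
    g H b y ∈ Set.Icc (0:ℝ) 1 := by
  have hH0 : (0:ℝ) < H := by linarith
  have hd0 : 0 ≤ y / H := div_nonneg hy.1 hH0.le
  have hd : y / H ≤ 1 / 2 := by rw [div_le_iff₀ hH0]; nlinarith [hy.1, hy.2]
  cases b
  · rw [g_false]; constructor <;> linarith
  · rw [g_true]; constructor <;> linarith

lemma tent_g (hH : 2 ≤ H) {b : Bool} {y : ℝ} (hy : y ∈ Set.Icc (0:ℝ) 1) :
    tent H (g H b y) = y := by
  have hH0 : (0:ℝ) < H := by linarith
  have hHy : H * (y / H) = y := by field_simp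
  have hd : y / H ≤ 1 / 2 := by rw [div_le_iff₀ hH0]; nlinarith [hy.1, hy.2]
  cases b
  · rw [g_false]
    rw [tent, if_pos hd, hHy]
  · rw [g_true]
    by_cases hv : 1 - y / H ≤ 1 / 2
    · have h1 : 1 / 2 ≤ y / H := by linarith
      have h2 : H / 2 ≤ y := by
        rw [le_div_iff₀ hH0] at h1; linarith
      have h3 : y = H / 2 := by nlinarith [hy.2]
      rw [tent, if_pos hv, mul_sub, mul_one, hHy]
      linarith
    · rw [tent, if_neg hv]
      have : 1 - (1 - y / H) = y / H := by ring
      rw [this, hHy]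

lemma g_itin (hH : 2 ≤ H) (y : ℝ) :
    g H (decide (1/2 < y)) (tent H y) = y := by
  have hH0 : (0:ℝ) < H := by linarith
  by_cases h : y ≤ 1/2
  · have h' : ¬ (1/2 < y) := not_lt.2 h
    rw [tent, if_pos h]
    rw [decide_eq_false (not_lt.2 h), g_false]
    field_simp
  · have h' : (1:ℝ)/2 < y := not_le.1 h
    rw [tent, if_neg h]
    rw [show decide ((1:ℝ)/2 < y) = true from decide_eq_true h', g_true]
    field_simp
    ring

lemma Gl_mem (hH : 2 ≤ H) (s : List Bool) {y : ℝ} (hy : y ∈ Set.Icc (0:ℝ) 1) :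
    Gl H s y ∈ Set.Icc (0:ℝ) 1 := by
  induction s with
  | nil => exact hy
  | cons b s ih => exact g_mem hH ih

lemma iterate_Gl (hH : 2 ≤ H) (s : List Bool) {y : ℝ} (hy : y ∈ Set.Icc (0:ℝ) 1) :
    (tent H)^[s.length] (Gl H s y) = y := by
  induction s with
  | nil => rfl
  | cons b s ih =>
    rw [List.length_cons, Gl_cons, Function.iterate_succ_apply,
      tent_g hH (Gl_mem hH s hy), ih]

lemma g_dist (hH : 2 ≤ H) (b : Bool) (u v : ℝ) :
    |g H b u - g H b v| = |u - v| / H := by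
  have hH0 : (0:ℝ) < H := by linarith
  cases b <;> [rw [g_false, g_false]; rw [g_true, g_true]]
  · rw [div_sub_div_same, abs_div, abs_of_pos hH0]
  · have : (1 - u / H) - (1 - v / H) = (v - u) / H := by ring
    rw [this, abs_div, abs_of_pos hH0, abs_sub_comm]

lemma Gl_dist (hH : 2 ≤ H) (s : List Bool) (u v : ℝ) :
    |Gl H s u - Gl H s v| = |u - v| / H ^ s.length := by
  induction s with
  | nil => simp [Gl_nil]
  | cons b s ih =>
    rw [List.length_cons, Gl_cons, Gl_cons, g_dist hH, ih, div_div, pow_succ]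

lemma Gl_continuous (s : List Bool) : Continuous fun y => Gl H s y := by
  induction s with
  | nil => exact continuous_id
  | cons b s ih =>
    have hg : Continuous fun t => g H b t := by
      cases b
      · simp only [g_false]; fun_prop
      · simp only [g_true]; fun_prop
    exact hg.comp ih

lemma exists_fixed (hH : 2 ≤ H) (s : List Bool) :
    ∃ x, x ∈ Set.Icc (0:ℝ) 1 ∧ Gl H s x = x := by
  have hc : Continuous fun y => Gl H s y - y := (Gl_continuous s).sub continuous_id
  have h0 : (0:ℝ) ≤ Gl H s 0 - 0 := by
    have := (Gl_mem hH s (by norm_num : (0:ℝ) ∈ Set.Icc (0:ℝ) 1)).1; linarith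
  have h1 : Gl H s 1 - 1 ≤ 0 := by
    have := (Gl_mem hH s (by norm_num : (1:ℝ) ∈ Set.Icc (0:ℝ) 1)).2; linarith
  have hsub := intermediate_value_Icc' (by norm_num : (0:ℝ) ≤ 1) hc.continuousOn
  have h0mem : (0:ℝ) ∈ Set.Icc (Gl H s 1 - 1) (Gl H s 0 - 0) := ⟨h1, h0⟩
  obtain ⟨x, hx, hfx⟩ := hsub h0mem
  exact ⟨x, hx, by linarith [sub_eq_zero.1 hfx]⟩

lemma unique_fixed (hH : 2 ≤ H) {s : List Bool} (hs : 1 ≤ s.length) {x y : ℝ}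
    (hx : Gl H s x = x) (hy : Gl H s y = y) : x = y := by
  have hH0 : (0:ℝ) < H := by linarith
  have hpow : (2:ℝ) ≤ H ^ s.length := by
    calc (2:ℝ) = 2 ^ 1 := by norm_num
    _ ≤ 2 ^ s.length := pow_le_pow_right₀ (by norm_num) hs
    _ ≤ H ^ s.length := pow_le_pow_left₀ (by norm_num) hH _
  have hd := Gl_dist hH s x y
  rw [hx, hy, eq_div_iff (by positivity : (H:ℝ) ^ s.length ≠ 0)] at hd
  have habs : 0 ≤ |x - y| := abs_nonneg _
  have : |x - y| = 0 := by nlinarith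
  have := abs_eq_zero.1 this
  linarith [sub_eq_zero.1 this]

lemma tent_zero : tent H 0 = 0 := by
  rw [tent, if_pos (by norm_num)]; ring

lemma tent_nonneg (hH : 2 ≤ H) {y : ℝ} (hy : y ∈ Set.Icc (0:ℝ) 1) : 0 ≤ tent H y := by
  rw [tent]
  split <;> nlinarith [hy.1, hy.2]

lemma dec (hH : 2 ≤ H) {z : ℝ} (hz : z < 0) (k : ℕ) :
    (tent H)^[k] z ≤ z ∧ (tent H)^[k] z < 0 := by
  induction k with
  | zero => exact ⟨le_refl _, hz⟩
  | succ k ih =>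
    obtain ⟨h1, h2⟩ := ih
    rw [Function.iterate_succ_apply']
    have ht : tent H ((tent H)^[k] z) = H * (tent H)^[k] z := by
      rw [tent, if_pos (by linarith)]
    rw [ht]
    constructor <;> nlinarith

/-- A periodic orbit starting in `[0,1]` stays in `[0,1]`. -/
lemma orbit_mem (hH : 2 ≤ H) {x : ℝ} (hx : x ∈ Set.Icc (0:ℝ) 1) {T : ℕ} (hT : 1 ≤ T)
    (hfix : (tent H)^[T] x = x) : ∀ j, (tent H)^[j] x ∈ Set.Icc (0:ℝ) 1 := by
  intro j
  induction j with
  | zero => exact hx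
  | succ j ih =>
    rw [Function.iterate_succ_apply']
    refine ⟨tent_nonneg hH ih, ?_⟩
    by_contra hgt
    push_neg at hgt
    set w := tent H ((tent H)^[j] x) with hw
    have hzdef : (tent H)^[j+2] x = tent H w := by
      rw [Function.iterate_succ_apply', Function.iterate_succ_apply']
    have hzneg : tent H w < 0 := by
      rw [tent, if_neg (by push_neg; linarith)]
      nlinarith
    have hzneg' : (tent H)^[j+2] x < 0 := by rw [hzdef]; exact hzneg
    have hper : (tent H)^[T] ((tent H)^[j+2] x) = (tent H)^[j+2] x := by
      rw [← Function.iterate_add_apply, add_comm, Function.iterate_add_apply, hfix]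
    obtain ⟨m, rfl⟩ : ∃ m, T = m + 1 := ⟨T - 1, by omega⟩
    generalize hzg : (tent H)^[j+2] x = z at hzneg' hper
    have htz : tent H z = H * z := by rw [tent, if_pos (by linarith)]
    have htz2 : tent H z < 0 := by rw [htz]; nlinarith
    have hdec := (dec hH htz2 m).1
    rw [Function.iterate_succ_apply] at hper
    nlinarith [hdec, htz, hper, hzneg']

/-- A periodic orbit never hits `1/2`. -/
lemma orbit_ne_half (hH : 2 ≤ H) {x : ℝ} (hx : x ∈ Set.Icc (0:ℝ) 1) {T : ℕ} (hT : 1 ≤ T)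
    (hfix : (tent H)^[T] x = x) : ∀ j, (tent H)^[j] x ≠ 1 / 2 := by
  intro j h
  have h1 : (tent H)^[j+1] x = H / 2 := by
    rw [Function.iterate_succ_apply', h, tent, if_pos (le_refl _)]; ring
  have hle := (orbit_mem hH hx hT hfix (j+1)).2
  rw [h1] at hle
  have hH2 : H = 2 := by linarith
  have h1' : (tent H)^[j+1] x = 1 := by rw [h1, hH2]; norm_num
  have h2 : (tent H)^[j+2] x = 0 := by
    rw [show j + 2 = (j+1) + 1 from rfl, Function.iterate_succ_apply', h1', tent,
      if_neg (by norm_num)]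
    ring
  obtain ⟨m, rfl⟩ : ∃ m, T = m + 1 := ⟨T - 1, by omega⟩
  have hA : (tent H)^[2*m + (j+2)] x = 0 := by
    rw [Function.iterate_add_apply, h2, Function.iterate_fixed tent_zero]
  have hB : (tent H)^[j + ((m+1)+(m+1))] x = 1/2 := by
    rw [Function.iterate_add_apply, Function.iterate_add_apply, hfix, hfix, h]
  have he : 2*m + (j+2) = j + ((m+1)+(m+1)) := by ring
  rw [he, hB] at hA
  norm_num at hA

/-- The itinerary recovers the point. -/
lemma itin (hH : 2 ≤ H) (n : ℕ) (y : ℝ) :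
    Gl H (List.ofFn fun j : Fin n => decide ((1:ℝ)/2 < (tent H)^[(j:ℕ)] y))
      ((tent H)^[n] y) = y := by
  induction n generalizing y with
  | zero => rfl
  | succ n ih =>
    rw [List.ofFn_succ]
    have hl : (List.ofFn fun i : Fin n =>
        decide ((1:ℝ)/2 < (tent H)^[((i.succ : Fin (n+1)):ℕ)] y)) =
        List.ofFn fun i : Fin n => decide ((1:ℝ)/2 < (tent H)^[(i:ℕ)] (tent H y)) := by
      refine congrArg List.ofFn (funext fun i => ?_)
      rw [Fin.val_succ, Function.iterate_succ_apply]
    rw [hl, Gl_cons, Function.iterate_succ_apply, ih (tent H y)]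
    simpa using g_itin hH y

/-- A fixed point of `Gl` determines its symbols. -/
lemma branch (hH : 2 ≤ H) : ∀ (s : List Bool) (z : ℝ), z ∈ Set.Icc (0:ℝ) 1 →
    ∀ (j : ℕ) (hj : j < s.length), (tent H)^[j] (Gl H s z) ≠ 1/2 →
    s.get ⟨j, hj⟩ = decide ((1:ℝ)/2 < (tent H)^[j] (Gl H s z)) := by
  intro s
  induction s with
  | nil => intro z hz j hj; simp at hj
  | cons b s ih =>
    intro z hz j hj hne
    have hw : Gl H s z ∈ Set.Icc (0:ℝ) 1 := Gl_mem hH s hz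
    cases j with
    | zero =>
      simp only [List.get, Function.iterate_zero_apply] at hne ⊢
      rw [Gl_cons] at hne ⊢
      cases b
      · have := g_false_le hH hw
        symm
        apply decide_eq_false
        push_neg
        linarith
      · have := g_true_ge hH hw
        symm
        apply decide_eq_true
        rcases lt_or_eq_of_le this with h | h
        · exact h
        · exact absurd h.symm hne
    | succ j =>
      have hred : (tent H)^[j+1] (Gl H (b :: s) z) = (tent H)^[j] (Gl H s z) := by
        rw [Gl_cons, Function.iterate_succ_apply, tent_g hH hw]
      rw [hred] at hne ⊢
      have hj' : j < s.length := by simpa using hj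
      exact ih z hz j hj' hne

end TentAux

open TentAux in
theorem card_fixed_points_of_iterate (H : ℝ) (hH : 2 ≤ H) (T : ℕ) (hT : 1 ≤ T) :
    {x ∈ Set.Icc (0 : ℝ) 1 | (tent H)^[T] x = x}.ncard = 2 ^ T := by
  have hex : ∀ s : Fin T → Bool, ∃ x, x ∈ Set.Icc (0:ℝ) 1 ∧ Gl H (List.ofFn s) x = x :=
    fun s => exists_fixed hH (List.ofFn s)
  choose Φ hmem hfixG using hex
  have hlen : ∀ s : Fin T → Bool, (List.ofFn s).length = T := fun s => List.length_ofFn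
  have hfixT : ∀ s : Fin T → Bool, (tent H)^[T] (Φ s) = Φ s := by
    intro s
    have := iterate_Gl hH (List.ofFn s) (hmem s)
    rw [hfixG s, hlen s] at this
    exact this
  have hrange : {x ∈ Set.Icc (0 : ℝ) 1 | (tent H)^[T] x = x} = Set.range Φ := by
    apply Set.Subset.antisymm
    · rintro x ⟨hx1, hx2⟩
      set s : Fin T → Bool := fun j => decide ((1:ℝ)/2 < (tent H)^[(j:ℕ)] x) with hs
      have h1 : Gl H (List.ofFn s) x = x := by
        have := itin hH T x
        rw [hx2] at this
        exact this
      have : Φ s = x :=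
        unique_fixed hH (by rw [hlen s]; exact hT) (hfixG s) h1
      exact ⟨s, this⟩
    · rintro x ⟨s, rfl⟩
      exact ⟨hmem s, hfixT s⟩
  have hinj : Function.Injective Φ := by
    intro s t hst
    set x := Φ s with hx
    have hxm : x ∈ Set.Icc (0:ℝ) 1 := hmem s
    have hxs : Gl H (List.ofFn s) x = x := hfixG s
    have hxt : Gl H (List.ofFn t) x = x := by
      have h := hfixG t; rw [← hst] at h; exact h
    have hxfix : (tent H)^[T] x = x := hfixT s
    have hnh : ∀ j, (tent H)^[j] x ≠ 1/2 := orbit_ne_half hH hxm hT hxfix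
    funext j
    have hjs : (j : ℕ) < (List.ofFn s).length := by rw [hlen s]; exact j.isLt
    have hjt : (j : ℕ) < (List.ofFn t).length := by rw [hlen t]; exact j.isLt
    have hbs := branch hH (List.ofFn s) x hxm j hjs (by rw [hxs]; exact hnh j)
    have hbt := branch hH (List.ofFn t) x hxm j hjt (by rw [hxt]; exact hnh j)
    rw [hxs] at hbs
    rw [hxt] at hbt
    have h1 : s j = decide ((1:ℝ)/2 < (tent H)^[(j:ℕ)] x) := by
      rw [← hbs]; simp [List.get_ofFn]
    have h2 : t j = decide ((1:ℝ)/2 < (tent H)^[(j:ℕ)] x) := by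
      rw [← hbt]; simp [List.get_ofFn]
    rw [h1, h2]
  rw [hrange, ← Set.image_univ, Set.ncard_image_of_injective _ hinj, Set.ncard_univ,
    Nat.card_eq_fintype_card]
  simp
end

section
/- Let H ≥ 2 and let T be a prime number. Then the generalized tent map f has exactly (2^T − 2)/T periodic orbits of exact period T; equivalently, the set of points x ∈ [0, 1] with f^T(x) = x and f^j(x) ≠ x for all 1 ≤ j < T has exactly 2^T − 2 elements, and it is partitioned into orbits of size T. -/
namespace TentProof

open Function Set

variable {H : ℝ}

lemma tent_le {x : ℝ} (h : x ≤ 1/2) : tent H x = H * x := if_pos h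
lemma tent_gt {x : ℝ} (h : ¬ x ≤ 1/2) : tent H x = H * (1 - x) := if_neg h

lemma tent_zero : tent H 0 = 0 := by simp [tent]

lemma iter_zero (n : ℕ) : (tent H)^[n] 0 = 0 := Function.iterate_fixed tent_zero n

lemma tent_nonneg (hH : 2 ≤ H) {x : ℝ} (hx : x ∈ Icc (0:ℝ) 1) : 0 ≤ tent H x := by
  obtain ⟨h0, h1⟩ := hx
  by_cases h : x ≤ 1/2
  · rw [tent_le h]; nlinarith
  · rw [tent_gt h]; nlinarith

lemma iter_neg (hH : 2 ≤ H) : ∀ (n : ℕ) (y : ℝ), y < 0 →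
    (tent H)^[n] y ≤ y ∧ (tent H)^[n] y < 0
  | 0, y, hy => ⟨le_rfl, hy⟩
  | (n+1), y, hy => by
      have h1 : tent H y ≤ y ∧ tent H y < 0 := by
        rw [tent_le (by linarith : y ≤ 1/2)]
        constructor <;> nlinarith
      rw [Function.iterate_succ_apply]
      obtain ⟨a, b⟩ := iter_neg hH n (tent H y) h1.2
      exact ⟨a.trans h1.1, b⟩

/-- Branch inverses of the tent map. -/
noncomputable def g (H : ℝ) (b : Bool) (y : ℝ) : ℝ := if b then 1 - y / H else y / H

/-- Composition of branch inverses along a word. -/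
noncomputable def G (H : ℝ) : List Bool → ℝ → ℝ
  | [], y => y
  | b :: l, y => g H b (G H l y)

/-- Itinerary of a point. -/
noncomputable def itin (H : ℝ) : ℕ → ℝ → List Bool
  | 0, _ => []
  | n+1, x => (if x ≤ 1/2 then false else true) :: itin H n (tent H x)

lemma itin_length : ∀ (n : ℕ) (x : ℝ), (itin H n x).length = n
  | 0, _ => rfl
  | (n+1), x => by simp [itin, itin_length n]

lemma div_le_half (hH : 2 ≤ H) {y : ℝ} (hy : y ≤ 1) : y / H ≤ 1/2 := by
  rw [div_le_iff₀ (by linarith : (0:ℝ) < H)]; nlinarith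

lemma g_mem (hH : 2 ≤ H) {y : ℝ} (hy : y ∈ Icc (0:ℝ) 1) (b : Bool) :
    g H b y ∈ Icc (0:ℝ) 1 := by
  obtain ⟨h0, h1⟩ := hy
  have hd0 : 0 ≤ y / H := div_nonneg h0 (by linarith)
  have hd : y / H ≤ 1/2 := div_le_half hH h1
  cases b <;> simp only [g, Bool.false_eq_true, if_false, if_true] <;>
    constructor <;> linarith

lemma tent_g (hH : 2 ≤ H) {y : ℝ} (hy : y ∈ Icc (0:ℝ) 1) (b : Bool) :
    tent H (g H b y) = y := by
  have hH0 : (0:ℝ) < H := by linarith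
  have hd : y / H ≤ 1/2 := div_le_half hH hy.2
  cases b
  · rw [show g H false y = y / H from rfl, tent_le hd]
    field_simp
  · rw [show g H true y = 1 - y / H from rfl]
    by_cases h : 1 - y / H ≤ 1/2
    · have : y / H = 1/2 := by linarith
      rw [tent_le h, this]
      rw [div_eq_iff (ne_of_gt hH0)] at this
      linarith
    · rw [tent_gt h]
      field_simp
      ring

lemma G_mem (hH : 2 ≤ H) : ∀ (l : List Bool) {y : ℝ}, y ∈ Icc (0:ℝ) 1 →
    G H l y ∈ Icc (0:ℝ) 1
  | [], y, hy => hy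
  | b :: l, y, hy => g_mem hH (G_mem hH l hy) b

lemma iter_G (hH : 2 ≤ H) : ∀ (l : List Bool) {y : ℝ}, y ∈ Icc (0:ℝ) 1 →
    (tent H)^[l.length] (G H l y) = y
  | [], y, hy => rfl
  | b :: l, y, hy => by
      have hz : G H l y ∈ Icc (0:ℝ) 1 := G_mem hH l hy
      rw [List.length_cons, Function.iterate_succ_apply,
        show G H (b :: l) y = g H b (G H l y) from rfl, tent_g hH hz b]
      exact iter_G hH l hy

lemma g_dist (hH : 2 ≤ H) (b : Bool) (y z : ℝ) :
    dist (g H b y) (g H b z) ≤ (1/2) * dist y z := by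
  have hH0 : (0:ℝ) < H := by linarith
  have key : dist (y / H) (z / H) ≤ (1/2) * dist y z := by
    rw [Real.dist_eq, Real.dist_eq, div_sub_div_same, abs_div, abs_of_pos hH0]
    rw [div_le_iff₀ hH0]
    nlinarith [abs_nonneg (y - z)]
  cases b
  · simpa [g] using key
  · have : dist (1 - y / H) (1 - z / H) = dist (y / H) (z / H) := by
      rw [Real.dist_eq, Real.dist_eq]
      ring_nf
      rw [abs_sub_comm]
      ring_nf
    simpa [g, this] using key

lemma G_dist (hH : 2 ≤ H) : ∀ (l : List Bool) (y z : ℝ),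
    dist (G H l y) (G H l z) ≤ dist y z
  | [], _, _ => le_rfl
  | b :: l, y, z => by
      calc dist (G H (b :: l) y) (G H (b :: l) z)
          ≤ (1/2) * dist (G H l y) (G H l z) := g_dist hH b _ _
        _ ≤ (1/2) * dist y z := by
            have := G_dist hH l y z; linarith
        _ ≤ dist y z := by have := dist_nonneg (x := y) (y := z); linarith

lemma G_dist' (hH : 2 ≤ H) {l : List Bool} (hl : l ≠ []) (y z : ℝ) :
    dist (G H l y) (G H l z) ≤ (1/2) * dist y z := by
  cases l with
  | nil => exact absurd rfl hl
  | cons b l =>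
      calc dist (G H (b :: l) y) (G H (b :: l) z)
          ≤ (1/2) * dist (G H l y) (G H l z) := g_dist hH b _ _
        _ ≤ (1/2) * dist y z := by have := G_dist hH l y z; linarith

lemma G_contract (hH : 2 ≤ H) {l : List Bool} (hl : l ≠ []) :
    ContractingWith (1/2 : NNReal) (G H l) := by
  constructor
  · rw [← NNReal.coe_lt_coe]; norm_num
  · apply LipschitzWith.of_dist_le_mul
    intro x y
    have := G_dist' hH hl x y
    push_cast
    linarith

/-- The fixed point of `G H l`. -/
noncomputable def fp (hH : 2 ≤ H) {l : List Bool} (hl : l ≠ []) : ℝ :=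
  ContractingWith.fixedPoint (G H l) (G_contract hH hl)

lemma fp_fixed (hH : 2 ≤ H) {l : List Bool} (hl : l ≠ []) :
    G H l (fp hH hl) = fp hH hl :=
  (G_contract hH hl).fixedPoint_isFixedPt

lemma fp_unique (hH : 2 ≤ H) {l : List Bool} (hl : l ≠ []) {x : ℝ}
    (hx : G H l x = x) : x = fp hH hl :=
  (G_contract hH hl).fixedPoint_unique hx

lemma fp_mem (hH : 2 ≤ H) {l : List Bool} (hl : l ≠ []) :
    fp hH hl ∈ Icc (0:ℝ) 1 := by
  set x := fp hH hl with hxdef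
  have hx : G H l x = x := fp_fixed hH hl
  by_contra hmem
  rw [Set.mem_Icc, not_and_or] at hmem
  rcases hmem with h | h
  · push_neg at h
    have h0 : G H l 0 ∈ Icc (0:ℝ) 1 := G_mem hH l (by norm_num)
    have hd := G_dist' hH hl x 0
    rw [hx, Real.dist_eq, Real.dist_eq, sub_zero, abs_of_neg h] at hd
    obtain ⟨h1, -⟩ := abs_le.1 hd
    have := h0.1
    linarith
  · push_neg at h
    have h1m : G H l 1 ∈ Icc (0:ℝ) 1 := G_mem hH l (by norm_num)
    have hd := G_dist' hH hl x 1
    rw [hx, Real.dist_eq, Real.dist_eq, abs_of_pos (by linarith : (0:ℝ) < x - 1)] at hd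
    obtain ⟨-, h2⟩ := abs_le.1 hd
    have := h1m.2
    linarith

lemma fp_per (hH : 2 ≤ H) {l : List Bool} (hl : l ≠ []) :
    (tent H)^[l.length] (fp hH hl) = fp hH hl := by
  conv_lhs => rw [← fp_fixed hH hl]
  exact iter_G hH l (fp_mem hH hl)

lemma G_itin (hH : 2 ≤ H) : ∀ (n : ℕ) (x : ℝ), G H (itin H n x) ((tent H)^[n] x) = x
  | 0, x => rfl
  | (n+1), x => by
      have hH0 : (0:ℝ) < H := by linarith
      rw [show itin H (n+1) x = (if x ≤ 1/2 then false else true) :: itin H n (tent H x)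
          from rfl, Function.iterate_succ_apply,
        show ∀ b y, G H (b :: itin H n (tent H x)) y
            = g H b (G H (itin H n (tent H x)) y) from fun _ _ => rfl,
        G_itin hH n (tent H x)]
      by_cases h : x ≤ 1/2
      · rw [if_pos h, tent_le h, show g H false (H * x) = H * x / H from rfl]
        field_simp
      · rw [if_neg h, tent_gt h, show g H true (H * (1 - x)) = 1 - H * (1 - x) / H from rfl]
        field_simp
        ring

lemma orbit_Icc (hH : 2 ≤ H) {x : ℝ} (hx : x ∈ Icc (0:ℝ) 1) {n : ℕ}
    (hper : (tent H)^[n] x = x) : ∀ j ≤ n, (tent H)^[j] x ∈ Icc (0:ℝ) 1 := by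
  by_contra hcon
  push_neg at hcon
  obtain ⟨j0, hj0n, hj0⟩ := hcon
  have hex : ∃ j, j ≤ n ∧ (tent H)^[j] x ∉ Icc (0:ℝ) 1 := ⟨j0, hj0n, hj0⟩
  classical
  obtain ⟨hjn, hj⟩ := Nat.find_spec hex
  set j := Nat.find hex with hjdef
  have hj0' : j ≠ 0 := by
    intro h
    rw [h] at hj
    exact hj hx
  have hprev : (tent H)^[j-1] x ∈ Icc (0:ℝ) 1 := by
    by_contra h
    exact Nat.find_min hex (by omega) ⟨by omega, h⟩
  have hy : (tent H)^[j] x = tent H ((tent H)^[j-1] x) := by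
    conv_lhs => rw [show j = (j-1)+1 by omega]
    rw [Function.iterate_succ_apply']
  have hge : 0 ≤ (tent H)^[j] x := hy ▸ tent_nonneg hH hprev
  have hgt : 1 < (tent H)^[j] x := by
    rw [Set.mem_Icc, not_and_or] at hj
    rcases hj with h | h <;> push_neg at h <;> linarith
  rcases eq_or_lt_of_le hjn with heq | hlt
  · rw [heq, hper] at hgt
    linarith [hx.2]
  · have hneg : (tent H)^[j+1] x < 0 := by
      rw [Function.iterate_succ_apply', tent_gt (by linarith : ¬ (tent H)^[j] x ≤ 1/2)]
      nlinarith
    have h2 : (tent H)^[n] x < 0 := by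
      have hdec : (tent H)^[n] x = (tent H)^[n - (j+1)] ((tent H)^[j+1] x) := by
        rw [← Function.iterate_add_apply]
        congr 1
        omega
      rw [hdec]
      exact (iter_neg hH _ _ hneg).2
    rw [hper] at h2
    linarith [hx.1]

lemma ne_half (hH : 2 ≤ H) {x : ℝ} (hx : x ∈ Icc (0:ℝ) 1) {n : ℕ}
    (hper : (tent H)^[n] x = x) {j : ℕ} (hj : j < n) : (tent H)^[j] x ≠ 1/2 := by
  intro h
  have hk : x = (tent H)^[n - j] ((1:ℝ)/2) := by
    rw [← h, ← Function.iterate_add_apply, show n - j + j = n by omega, hper]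
  set k := n - j with hkdef
  have hk1 : 1 ≤ k := by omega
  have h2 : tent H (1/2) = H/2 := by rw [tent_le le_rfl]; ring
  rcases lt_or_ge 2 H with hH2 | hH2
  · -- H > 2 : the orbit of 1/2 escapes
    rcases eq_or_lt_of_le hk1 with h1 | h1
    · rw [← h1, Function.iterate_one, h2] at hk
      linarith [hx.2]
    · have hzneg : tent H (tent H (1/2)) < 0 := by
        rw [h2, tent_gt (by linarith : ¬ (H:ℝ)/2 ≤ 1/2)]
        nlinarith
      have : x < 0 := by
        rw [hk, show k = (k-2) + 2 by omega, Function.iterate_add_apply,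
          show (tent H)^[2] ((1:ℝ)/2) = tent H (tent H (1/2)) from rfl]
        exact (iter_neg hH _ _ hzneg).2
      linarith [hx.1]
  · -- H = 2
    have hHe : H = 2 := le_antisymm hH2 hH
    have ht1 : tent H (1/2) = 1 := by rw [h2, hHe]; norm_num
    have ht2 : tent H 1 = 0 := by rw [tent_gt (by norm_num : ¬ (1:ℝ) ≤ 1/2)]; ring
    rcases eq_or_lt_of_le hk1 with h1 | h1
    · rw [← h1, Function.iterate_one, ht1] at hk
      have hn1 : 1 ≤ n := by omega
      have : (tent H)^[n] x = 0 := by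
        rw [hk, show n = (n-1) + 1 by omega, Function.iterate_add_apply,
          Function.iterate_one, ht2, iter_zero]
      rw [hper] at this
      rw [this] at hk
      norm_num at hk
    · have hx0 : x = 0 := by
        rw [hk, show k = (k-2) + 2 by omega, Function.iterate_add_apply,
          show (tent H)^[2] ((1:ℝ)/2) = tent H (tent H (1/2)) from rfl, ht1, ht2,
          iter_zero]
      rw [hx0, iter_zero] at h
      norm_num at h

lemma itin_G (hH : 2 ≤ H) : ∀ (l : List Bool) (y : ℝ), y ∈ Icc (0:ℝ) 1 →
    (∀ j < l.length, (tent H)^[j] (G H l y) ≠ 1/2) →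
    itin H l.length (G H l y) = l
  | [], y, _, _ => rfl
  | b :: l, y, hy, hhalf => by
      have hz : G H l y ∈ Icc (0:ℝ) 1 := G_mem hH l hy
      have hcons : G H (b :: l) y = g H b (G H l y) := rfl
      have htx : tent H (G H (b :: l) y) = G H l y := by
        rw [hcons]; exact tent_g hH hz b
      rw [List.length_cons,
        show itin H (l.length + 1) (G H (b :: l) y)
          = (if G H (b :: l) y ≤ 1/2 then false else true)
            :: itin H l.length (tent H (G H (b :: l) y)) from rfl, htx]
      have hd : G H l y / H ≤ 1/2 := div_le_half hH hz.2
      have hd0 : 0 ≤ G H l y / H := div_nonneg hz.1 (by linarith)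
      have hhead : (if G H (b :: l) y ≤ 1/2 then false else true) = b := by
        cases b
        · rw [if_pos]
          rw [hcons, show g H false (G H l y) = G H l y / H from rfl]
          linarith
        · rw [if_neg]
          have hx2 : G H (true :: l) y = 1 - G H l y / H := rfl
          have hne : G H (true :: l) y ≠ 1/2 := by
            have := hhalf 0 (by rw [List.length_cons]; omega)
            simpa using this
          rw [hx2] at hne ⊢
          intro hle
          have : (1:ℝ)/2 ≤ 1 - G H l y / H := by linarith
          exact hne (le_antisymm hle this)
      rw [hhead, itin_G hH l y hy ?_]
      intro j hj
      have := hhalf (j+1) (by rw [List.length_cons]; omega)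
      rw [Function.iterate_succ_apply, htx] at this
      exact this

variable {T : ℕ}

lemma vec_ne_nil (hT : 1 ≤ T) (v : List.Vector Bool T) : v.1 ≠ [] := by
  intro h
  have := v.2
  rw [h] at this
  simp at this
  omega

/-- The periodic point associated to a word. -/
noncomputable def Phi (hH : 2 ≤ H) (hT : 1 ≤ T) (v : List.Vector Bool T) : ℝ :=
  fp hH (vec_ne_nil hT v)

lemma Phi_mem (hH : 2 ≤ H) (hT : 1 ≤ T) (v : List.Vector Bool T) :
    Phi hH hT v ∈ Icc (0:ℝ) 1 := fp_mem hH _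

lemma Phi_per (hH : 2 ≤ H) (hT : 1 ≤ T) (v : List.Vector Bool T) :
    (tent H)^[T] (Phi hH hT v) = Phi hH hT v := by
  have := fp_per hH (vec_ne_nil hT v)
  rwa [v.2] at this

lemma Phi_itin (hH : 2 ≤ H) (hT : 1 ≤ T) (v : List.Vector Bool T) :
    itin H T (Phi hH hT v) = v.1 := by
  have hfix : G H v.1 (Phi hH hT v) = Phi hH hT v := fp_fixed hH _
  have key := itin_G hH v.1 (Phi hH hT v) (Phi_mem hH hT v) ?_
  · rw [hfix, v.2] at key
    exact key
  · intro j hj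
    rw [hfix]
    exact ne_half hH (Phi_mem hH hT v) (Phi_per hH hT v) (v.2 ▸ hj)

lemma Phi_inj (hH : 2 ≤ H) (hT : 1 ≤ T) : Function.Injective (Phi hH hT) := by
  intro v w h
  have h1 := Phi_itin hH hT v
  have h2 := Phi_itin hH hT w
  rw [h] at h1
  exact Subtype.ext (h1.symm.trans h2)

lemma fix_eq_range (hH : 2 ≤ H) (hT : 1 ≤ T) :
    {x ∈ Icc (0:ℝ) 1 | (tent H)^[T] x = x} = Set.range (Phi hH hT) := by
  ext x
  constructor
  · rintro ⟨hx, hper⟩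
    have hGfix : G H (itin H T x) x = x := by
      have h := G_itin hH T x
      rwa [hper] at h
    have hlen : itin H T x ≠ [] := by
      intro h
      have := itin_length (H := H) T x
      rw [h] at this
      simp at this
      omega
    refine ⟨⟨itin H T x, itin_length T x⟩, ?_⟩
    exact (fp_unique hH hlen hGfix).symm
  · rintro ⟨v, rfl⟩
    exact ⟨Phi_mem hH hT v, Phi_per hH hT v⟩

lemma fix_ncard (hH : 2 ≤ H) (hT : 1 ≤ T) :
    {x ∈ Icc (0:ℝ) 1 | (tent H)^[T] x = x}.ncard = 2 ^ T := by
  rw [fix_eq_range hH hT, ← Set.image_univ,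
    Set.ncard_image_of_injective _ (Phi_inj hH hT), Set.ncard_univ,
    Nat.card_eq_fintype_card, card_vector]
  simp

lemma fix_finite (hH : 2 ≤ H) (hT : 1 ≤ T) :
    {x ∈ Icc (0:ℝ) 1 | (tent H)^[T] x = x}.Finite := by
  rw [fix_eq_range hH hT]
  exact Set.finite_range _

lemma tent_fixed_points (hH : 2 ≤ H) {x : ℝ} (h : tent H x = x) :
    x = 0 ∨ x = H / (H + 1) := by
  by_cases hx : x ≤ 1/2
  · left
    rw [tent_le hx] at h
    have h2 : (H - 1) * x = 0 := by linarith
    rcases mul_eq_zero.1 h2 with h3 | h3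
    · linarith
    · exact h3
  · right
    rw [tent_gt hx] at h
    rw [eq_div_iff (by linarith : H + 1 ≠ 0)]
    linarith

lemma c_fix (hH : 2 ≤ H) : tent H (H / (H + 1)) = H / (H + 1) := by
  have h1 : (0:ℝ) < H + 1 := by linarith
  have hgt : ¬ H / (H + 1) ≤ 1/2 := by
    intro hle
    rw [div_le_iff₀ h1] at hle
    linarith
  rw [tent_gt hgt]
  field_simp
  ring

end TentProof

theorem card_orbits_prime_period (H : ℝ) (hH : 2 ≤ H) (T : ℕ) (hT : T.Prime) :
    let P : Set ℝ := {x ∈ Set.Icc (0 : ℝ) 1 |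
      (tent H)^[T] x = x ∧ ∀ j : ℕ, 1 ≤ j → j < T → (tent H)^[j] x ≠ x}
    let orb : ℝ → Set ℝ := fun x => (fun j => (tent H)^[j] x) '' Set.Iio T
    let 𝒪 : Set (Set ℝ) := {s | ∃ x ∈ P, s = orb x}
    P.ncard = 2 ^ T - 2 ∧
      P = ⋃₀ 𝒪 ∧ (∀ s ∈ 𝒪, s.ncard = T) ∧ 𝒪.Pairwise Disjoint ∧
      𝒪.ncard = (2 ^ T - 2) / T := by
  intro P orb 𝒪
  open TentProof in
  have hT2 : 2 ≤ T := hT.two_le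
  have hT1 : 1 ≤ T := by omega
  have hTpos : 0 < T := by omega
  have hPmem : ∀ x : ℝ, x ∈ P ↔ x ∈ Set.Icc (0:ℝ) 1 ∧
      ((tent H)^[T] x = x ∧ ∀ j : ℕ, 1 ≤ j → j < T → (tent H)^[j] x ≠ x) :=
    fun x => Iff.rfl
  have horbmem : ∀ x w : ℝ, w ∈ orb x ↔ ∃ j < T, (tent H)^[j] x = w := by
    intro x w
    constructor
    · rintro ⟨j, hj, rfl⟩
      exact ⟨j, Set.mem_Iio.1 hj, rfl⟩
    · rintro ⟨j, hj, rfl⟩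
      exact ⟨j, Set.mem_Iio.2 hj, rfl⟩
  have h𝒪mem : ∀ s : Set ℝ, s ∈ 𝒪 ↔ ∃ x ∈ P, s = orb x := fun s => Iff.rfl
  set F : Set ℝ := {x ∈ Set.Icc (0:ℝ) 1 | (tent H)^[T] x = x} with hF
  have hFfin : F.Finite := TentProof.fix_finite hH hT1
  have hFcard : F.ncard = 2 ^ T := TentProof.fix_ncard hH hT1
  set c : ℝ := H / (H + 1) with hc
  have hc_pos : 0 < c := div_pos (by linarith) (by linarith)
  have hc_le : c ≤ 1 := by rw [hc, div_le_one (by linarith)]; linarith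
  have hc_fix : tent H c = c := TentProof.c_fix hH
  have h0_mem : (0:ℝ) ∈ F := ⟨⟨le_rfl, by norm_num⟩, TentProof.iter_zero T⟩
  have hc_mem : c ∈ F := ⟨⟨hc_pos.le, hc_le⟩, Function.iterate_fixed hc_fix T⟩
  -- P = F \ {0, c}
  have hPF : P = F \ {0, c} := by
    ext x
    rw [hPmem]
    constructor
    · rintro ⟨hxI, hper, hex⟩
      refine ⟨⟨hxI, hper⟩, ?_⟩
      rintro (rfl | rfl)
      · exact hex 1 le_rfl (by omega) (by rw [Function.iterate_one, TentProof.tent_zero])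
      · exact hex 1 le_rfl (by omega) (by rw [Function.iterate_one, hc_fix])
    · rintro ⟨⟨hxI, hper⟩, hnot⟩
      refine ⟨hxI, hper, ?_⟩
      intro j hj1 hjT heq
      have hpj : Function.IsPeriodicPt (tent H) j x := heq
      have hpT : Function.IsPeriodicPt (tent H) T x := hper
      have hgcd := hpj.gcd hpT
      have h1 : Nat.gcd j T = 1 := by
        have hnd : ¬ T ∣ j := fun hdvd =>
          absurd (Nat.le_of_dvd (by omega) hdvd) (by omega)
        have h2 := (Nat.Prime.coprime_iff_not_dvd hT).2 hnd
        rwa [Nat.coprime_comm] at h2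
      rw [h1] at hgcd
      have hfix1 : tent H x = x := by
        have := hgcd
        rwa [Function.IsPeriodicPt, Function.iterate_one] at this
      rcases TentProof.tent_fixed_points hH hfix1 with rfl | h3
      · exact hnot (Set.mem_insert _ _)
      · exact hnot (by rw [h3]; exact Set.mem_insert_of_mem _ rfl)
  have hsub : ({0, c} : Set ℝ) ⊆ F := by
    rintro y (rfl | rfl)
    · exact h0_mem
    · exact hc_mem
  have hPcard : P.ncard = 2 ^ T - 2 := by
    rw [hPF, Set.ncard_diff hsub, hFcard, Set.ncard_pair (ne_of_lt hc_pos)]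
  have hPfin : P.Finite := hFfin.subset (by rw [hPF]; exact Set.diff_subset)
  -- orbit facts
  have hmod : ∀ x : ℝ, (tent H)^[T] x = x → ∀ m, (tent H)^[m] x = (tent H)^[m % T] x := by
    intro x hper m
    exact (Function.IsPeriodicPt.iterate_mod_apply hper m).symm
  have hPorb : ∀ x ∈ P, ∀ i, i < T → (tent H)^[i] x ∈ P := by
    intro x hx i hi
    obtain ⟨hxI, hper, hex⟩ := (hPmem x).1 hx
    refine (hPmem _).2 ⟨TentProof.orbit_Icc hH hxI hper i (le_of_lt hi), ?_, ?_⟩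
    · rw [← Function.iterate_add_apply, add_comm, Function.iterate_add_apply, hper]
    · intro j hj1 hjT heq
      have h1 : (tent H)^[j + i] x = (tent H)^[i] x := by
        rw [Function.iterate_add_apply]
        exact heq
      have h2 := congrArg ((tent H)^[T - i]) h1
      rw [← Function.iterate_add_apply, ← Function.iterate_add_apply,
        show T - i + (j + i) = j + T by omega, show T - i + i = T by omega,
        Function.iterate_add_apply, hper] at h2
      exact hex j hj1 hjT h2
  have horb_sub : ∀ x ∈ P, orb x ⊆ P := by
    rintro x hx w ⟨i, hi, rfl⟩
    exact hPorb x hx i (Set.mem_Iio.1 hi)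
  have hself : ∀ x : ℝ, x ∈ orb x := fun x => ⟨0, Set.mem_Iio.2 hTpos, rfl⟩
  have hunion : P = ⋃₀ 𝒪 := by
    ext x
    constructor
    · intro hx
      exact ⟨orb x, ⟨x, hx, rfl⟩, hself x⟩
    · rintro ⟨s, ⟨y, hy, rfl⟩, hxs⟩
      exact horb_sub y hy hxs
  have hcard_orb : ∀ x ∈ P, (orb x).ncard = T := by
    intro x hx
    have hclaim : ∀ i j, i < j → j < T → (tent H)^[i] x ≠ (tent H)^[j] x := by
      intro i j hij hjT he
      have hyP := hPorb x hx i (lt_trans hij hjT)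
      obtain ⟨-, -, hex⟩ := (hPmem _).1 hyP
      refine hex (j - i) (by omega) (by omega) ?_
      rw [← Function.iterate_add_apply, show j - i + i = j by omega]
      exact he.symm
    have hinj : Set.InjOn (fun j => (tent H)^[j] x) (Set.Iio T) := by
      intro i hi j hj hij
      rcases lt_trichotomy i j with h | h | h
      · exact absurd hij (hclaim i j h (Set.mem_Iio.1 hj))
      · exact h
      · exact absurd hij.symm (hclaim j i h (Set.mem_Iio.1 hi))
    rw [show orb x = (fun j => (tent H)^[j] x) '' Set.Iio T from rfl,
      Set.ncard_image_of_injOn hinj,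
      show Set.Iio T = ↑(Finset.range T) from (Finset.coe_range T).symm,
      Set.ncard_coe_finset, Finset.card_range]
  have hcard𝒪 : ∀ s ∈ 𝒪, s.ncard = T := by
    rintro s ⟨x, hx, rfl⟩
    exact hcard_orb x hx
  have horb_eq : ∀ x ∈ P, ∀ z ∈ orb x, orb z = orb x := by
    rintro x hx z ⟨i, hiT', rfl⟩
    have hiT : i < T := Set.mem_Iio.1 hiT'
    obtain ⟨-, hper, -⟩ := (hPmem x).1 hx
    ext w
    rw [horbmem, horbmem]
    constructor
    · rintro ⟨j, hj, rfl⟩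
      refine ⟨(j + i) % T, Nat.mod_lt _ hTpos, ?_⟩
      rw [← hmod x hper (j + i), Function.iterate_add_apply]
    · rintro ⟨j, hj, rfl⟩
      refine ⟨(j + (T - i)) % T, Nat.mod_lt _ hTpos, ?_⟩
      rw [← Function.iterate_add_apply, hmod x hper ((j + (T - i)) % T + i)]
      have hmodeq : ((j + (T - i)) % T + i) % T = j := by
        rw [Nat.mod_add_mod, show j + (T - i) + i = j + T by omega,
          Nat.add_mod_right]
        exact Nat.mod_eq_of_lt hj
      rw [hmodeq]
  have hdisj : 𝒪.Pairwise Disjoint := by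
    rintro s ⟨x, hx, rfl⟩ t ⟨y, hy, rfl⟩ hst
    by_contra hcon
    rw [Set.not_disjoint_iff] at hcon
    obtain ⟨z, hz1, hz2⟩ := hcon
    exact hst ((horb_eq x hx z hz1).symm.trans (horb_eq y hy z hz2))
  have h𝒪fin : 𝒪.Finite := by
    have h1 : 𝒪 = orb '' P := by
      ext s
      constructor
      · rintro ⟨x, hx, rfl⟩
        exact ⟨x, hx, rfl⟩
      · rintro ⟨x, hx, rfl⟩
        exact ⟨x, hx, rfl⟩
    rw [h1]
    exact hPfin.image _
  have hfin_s : ∀ s ∈ 𝒪, s.Finite := by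
    rintro s ⟨x, hx, rfl⟩
    exact hPfin.subset (horb_sub x hx)
  have hcount : ∀ 𝒮 : Set (Set ℝ), 𝒮.Finite → 𝒮 ⊆ 𝒪 → (⋃₀ 𝒮).ncard = 𝒮.ncard * T := by
    intro 𝒮 hfin
    refine Set.Finite.induction_on _ hfin (motive := fun 𝒮 _ => 𝒮 ⊆ 𝒪 → (⋃₀ 𝒮).ncard = 𝒮.ncard * T) (fun _ => by simp) ?_
    intro a s ha hsfin IH hsub
    have ha𝒪 : a ∈ 𝒪 := hsub (Set.mem_insert _ _)
    have hs𝒪 : s ⊆ 𝒪 := (Set.subset_insert _ _).trans hsub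
    have hafin : a.Finite := hfin_s a ha𝒪
    have hsUfin : (⋃₀ s).Finite := Set.Finite.sUnion hsfin (fun t ht => hfin_s t (hs𝒪 ht))
    have hdisj_a : Disjoint a (⋃₀ s) := by
      rw [Set.disjoint_sUnion_right]
      intro t ht
      exact hdisj ha𝒪 (hs𝒪 ht) (fun h => ha (h ▸ ht))
    rw [Set.sUnion_insert, Set.ncard_union_eq hdisj_a hafin hsUfin, IH hs𝒪,
      Set.ncard_insert_of_notMem ha hsfin, hcard𝒪 a ha𝒪]
    ring
  have hPcard2 : P.ncard = 𝒪.ncard * T := by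
    rw [hunion]
    exact hcount 𝒪 h𝒪fin subset_rfl
  have h𝒪card : 𝒪.ncard = (2 ^ T - 2) / T := by
    rw [← hPcard, hPcard2, Nat.mul_div_cancel _ hTpos]
  exact ⟨hPcard, hunion, hcard𝒪, hdisj, h𝒪card⟩
end

section
/- Let H ≥ 2 and T ≥ 1, and for 1 ≤ j ≤ T set x_j = H^j/(H^T + 1). Then the points x_1, …, x_T are pairwise distinct elements of [0, 1], f(x_j) = x_{j+1} for 1 ≤ j ≤ T − 1, and f(x_T) = x_1; that is, (x_1, …, x_T) is a T-cycle of the generalized tent map f. -/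
theorem tent_of_le_half {H x : ℝ} (hx : x ≤ 1 / 2) : tent H x = H * x :=
  if_pos hx

/- At `a = 1` the argument is `1 / 2`, where both branches of `tent` agree. -/
theorem tent_div_add_one (H : ℝ) {a : ℝ} (ha : 1 ≤ a) : tent H (a / (a + 1)) = H / (a + 1) := by
  have hpos : 0 < a + 1 := by linarith
  unfold tent
  split_ifs
  · rw [div_le_iff₀ hpos] at *
    have ha1 : a = 1 := by linarith
    subst ha1
    ring
  · field_simp
    ring

theorem pow_div_pow_add_one_le_half {H : ℝ} (hH : 2 ≤ H) {j T : ℕ} (hjT : j < T) :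
    H ^ j / (H ^ T + 1) ≤ 1 / 2 := by
  have hpow : 0 ≤ H ^ j := by positivity
  have hstep : H ^ (j + 1) ≤ H ^ T := pow_le_pow_right₀ (by linarith) hjT
  rw [div_le_div_iff₀ (by positivity) two_pos, pow_succ] at *
  nlinarith

theorem pow_div_pow_add_one_mem_Icc {H : ℝ} (hH : 1 ≤ H) {j T : ℕ} (hjT : j ≤ T) :
    H ^ j / (H ^ T + 1) ∈ Set.Icc (0 : ℝ) 1 := by
  have hpos : 0 < H ^ T + 1 := by positivity
  refine ⟨by positivity, (div_le_one₀ hpos).2 ?_⟩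
  linarith [pow_le_pow_right₀ hH hjT]

theorem pow_div_injective {H : ℝ} (hH : 1 < H) {c : ℝ} (hc : c ≠ 0) :
    Function.Injective fun j : ℕ => H ^ j / c := fun _ _ h =>
  pow_right_injective₀ (by linarith) hH.ne' ((div_left_inj' hc).1 h)

theorem explicit_T_cycle_general (H : ℝ) (hH : 2 ≤ H) (T : ℕ)
    (x : ℕ → ℝ) (hx : ∀ j : ℕ, x j = H ^ j / (H ^ T + 1)) :
    (∀ i, 1 ≤ i → i ≤ T → ∀ j, 1 ≤ j → j ≤ T → x i = x j → i = j) ∧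
    (∀ j, 1 ≤ j → j ≤ T → x j ∈ Set.Icc (0 : ℝ) 1) ∧
    (∀ j, 1 ≤ j → j ≤ T - 1 → tent H (x j) = x (j + 1)) ∧
    tent H (x T) = x 1 := by
  obtain rfl : x = fun j => H ^ j / (H ^ T + 1) := funext hx
  have hH1 : 1 < H := by linarith
  refine ⟨fun i _ _ j _ _ hij => pow_div_injective hH1 (by positivity) hij,
    fun j _ hjT => pow_div_pow_add_one_mem_Icc hH1.le hjT, fun j _ hjT => ?_, ?_⟩
  · rw [tent_of_le_half (pow_div_pow_add_one_le_half hH (by omega))]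
    simp only [pow_succ]
    ring
  · simpa using tent_div_add_one H (one_le_pow₀ hH1.le : 1 ≤ H ^ T)

theorem explicit_T_cycle (H : ℝ) (hH : 2 ≤ H) (T : ℕ) (hT : 1 ≤ T)
    (x : ℕ → ℝ) (hx : ∀ j : ℕ, x j = H ^ j / (H ^ T + 1)) :
    (∀ i, 1 ≤ i → i ≤ T → ∀ j, 1 ≤ j → j ≤ T → x i = x j → i = j) ∧
    (∀ j, 1 ≤ j → j ≤ T → x j ∈ Set.Icc (0 : ℝ) 1) ∧
    (∀ j, 1 ≤ j → j ≤ T - 1 → tent H (x j) = x (j + 1)) ∧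
    tent H (x T) = x 1 :=
  explicit_T_cycle_general H hH T x hx
end
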